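/- arXiv:1512.02302 — 9 statements merged into one kernel-verified Lean document; each statement's English description precedes it below -/
import Mathlib

section
/- Let μ : J → ℝ be piecewise continuous and periodic with period T > 0. Then μ is asymptotically stable if and only if there exists a constant c > 0 such that ∫_{t}^{t+T} μ(s) ds ≤ −c for all t ∈ J; moreover, in this case μ is in fact uniformly exponentially stable (so for a periodic μ, asymptotic stability, exponential stability and uniform exponential stability are all equivalent to the existence of such a c). -/
open Filter MeasureTheory Set

/-!
Let `I` be the integral of `μ` over one period. On `J` every window `[t, t + T]` carries the
same integral `I`, so `∫ t₀..t μ` equals `⌊(t - t₀)/T⌋ I` up to an error bounded by the integral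
of `|μ|` over one period. Hence the integral tends to `-∞` exactly when `I < 0`, and then it
decays linearly with slope `I / T`, uniformly in the starting time. Extending `μ` periodically
from `J` to `ℝ` changes none of these integrals, so it suffices to treat periodic functions on `ℝ`.
-/

open Function intervalIntegral

theorem apply_add_nsmul_of_periodicOn {β : Type*} {f : ℝ → β} {a T : ℝ} (hT : 0 ≤ T)
    (hper : ∀ t ∈ Ici a, f (t + T) = f t) (n : ℕ) {t : ℝ} (ht : a ≤ t) : f (t + n • T) = f t := by
  induction n with
  | zero => simp
  | succ n ih =>
    have : 0 ≤ n • T := nsmul_nonneg hT n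
    rw [succ_nsmul, ← add_assoc, hper _ (show a ≤ t + n • T by linarith), ih]

section PeriodicExtension

variable {β : Type*} {T : ℝ} (hT : 0 < T) (a : ℝ) (f : ℝ → β)

/-- The `T`-periodic function on `ℝ` that agrees with `f` on `[a, a + T)`. -/
noncomputable def periodicExtension : ℝ → β := fun s => f (toIcoMod hT a s)

theorem periodic_periodicExtension : Periodic (periodicExtension hT a f) T := fun s => by
  simp only [periodicExtension, toIcoMod_add_right]

variable {hT a f}

theorem periodicExtension_eq_of_le (hper : ∀ t ∈ Ici a, f (t + T) = f t) {t : ℝ} (ht : a ≤ t) :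
    periodicExtension hT a f t = f t := by
  have hn : 0 ≤ toIcoDiv hT a t := by
    rw [toIcoDiv_eq_floor]
    exact Int.floor_nonneg.mpr (div_nonneg (sub_nonneg.mpr ht) hT.le)
  obtain ⟨n, hn⟩ := Int.eq_ofNat_of_zero_le hn
  have hmem := toIcoMod_mem_Ico hT a t
  conv_rhs => rw [← toIcoMod_add_toIcoDiv_zsmul hT a t, hn, natCast_zsmul]
  exact (apply_add_nsmul_of_periodicOn hT.le hper n hmem.1).symm

theorem eqOn_periodicExtension (hper : ∀ t ∈ Ici a, f (t + T) = f t) {b c : ℝ}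
    (hb : a ≤ b) (hc : a ≤ c) : EqOn f (periodicExtension hT a f) (uIcc b c) := fun _ hs =>
  (periodicExtension_eq_of_le hper ((le_min hb hc).trans hs.1)).symm

theorem intervalIntegrable_periodicExtension {f : ℝ → ℝ} (hper : ∀ t ∈ Ici a, f (t + T) = f t)
    (hf : IntervalIntegrable f volume a (a + T)) (b c : ℝ) :
    IntervalIntegrable (periodicExtension hT a f) volume b c :=
  (periodic_periodicExtension hT a f).intervalIntegrable hT.ne'
    (hf.congr ((eqOn_periodicExtension hper le_rfl (by linarith)).mono uIoc_subset_uIcc)) b c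

end PeriodicExtension

namespace Function.Periodic

variable {g : ℝ → ℝ} {T : ℝ}

theorem intervalIntegral_le_integral_abs (hg : Periodic g T)
    (hint : ∀ a b, IntervalIntegrable g volume a b) {a b : ℝ} (hab : a ≤ b) (hb : b ≤ a + T) :
    ∫ s in a..b, g s ≤ ∫ s in 0..T, |g s| := by
  calc ∫ s in a..b, g s ≤ ∫ s in a..b, |g s| :=
        integral_mono_on hab (hint a b) (hint a b).abs fun s _ => le_abs_self (g s)
    _ ≤ ∫ s in a..a + T, |g s| :=
        integral_mono_interval le_rfl hab hb (ae_of_all _ fun s => abs_nonneg (g s))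
          (hint a (a + T)).abs
    _ = ∫ s in 0..T, |g s| := by
        simpa using (hg.comp (|·|)).intervalIntegral_add_eq a 0

/-- Over `[t₀, t]`, a whole number `n` of periods contributes `n I`, and `n T ≥ t - t₀ - T`. -/
theorem intervalIntegral_le_of_integral_nonpos (hg : Periodic g T) (hT : 0 < T)
    (hint : ∀ a b, IntervalIntegrable g volume a b) (hI : ∫ s in 0..T, g s ≤ 0) (t₀ t : ℝ) :
    ∫ s in t₀..t, g s ≤
      (∫ s in 0..T, g s) / T * (t - t₀) + ((∫ s in 0..T, |g s|) - ∫ s in 0..T, g s) := by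
  set I := ∫ s in 0..T, g s
  set m := toIcoMod hT t₀ t
  set n := toIcoDiv hT t₀ t
  have hm := toIcoMod_mem_Ico hT t₀ t
  have ht : m + n • T = t := toIcoMod_add_toIcoDiv_zsmul hT t₀ t
  have hperiods : ∫ s in m..t, g s = n * I := by
    rw [← ht, hg.intervalIntegral_add_zsmul_eq n m hint, hg.intervalIntegral_add_eq m 0,
      zero_add, zsmul_eq_mul]
  have hrest : ∫ s in t₀..m, g s ≤ ∫ s in 0..T, |g s| :=
    hg.intervalIntegral_le_integral_abs hint hm.1 hm.2.le
  have hnI : n * I ≤ I / T * (t - t₀) - I := by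
    have hnT : (n : ℝ) * T = t - m := by rw [← ht, zsmul_eq_mul]; ring
    calc (n : ℝ) * I = I / T * (n * T) := by field_simp
      _ ≤ I / T * (t - t₀ - T) :=
        mul_le_mul_of_nonpos_left (by linarith [hm.2]) (div_nonpos_of_nonpos_of_nonneg hI hT.le)
      _ = I / T * (t - t₀) - I := by field_simp
  rw [← integral_add_adjacent_intervals (hint t₀ m) (hint m t), hperiods]
  linarith

theorem integral_neg_of_tendsto_atBot (hg : Periodic g T) (hT : 0 < T)
    (hint : ∀ a b, IntervalIntegrable g volume a b) (t₀ : ℝ)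
    (h : Tendsto (fun t => ∫ s in t₀..t, g s) atTop atBot) : ∫ s in 0..T, g s < 0 := by
  by_contra! hI
  have hperiods (n : ℕ) : ∫ s in t₀..t₀ + n * T, g s = n * ∫ s in 0..T, g s := by
    simpa only [natCast_zsmul, nsmul_eq_mul, hg.intervalIntegral_add_eq t₀ 0, zero_add]
      using hg.intervalIntegral_add_zsmul_eq n t₀ hint
  have hgrid : Tendsto (fun n : ℕ => t₀ + n * T) atTop atTop :=
    tendsto_atTop_add_const_left _ t₀ (tendsto_natCast_atTop_atTop.atTop_mul_const hT)
  obtain ⟨n, hn⟩ := ((h.comp hgrid).eventually (eventually_lt_atBot 0)).exists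
  have : (0 : ℝ) ≤ n * ∫ s in 0..T, g s := by positivity
  simp only [comp_apply, hperiods] at hn
  linarith

end Function.Periodic

theorem tendsto_atBot_of_le_neg_mul_add {g : ℝ → ℝ} {t₀ α β : ℝ} (hα : 0 < α)
    (h : ∀ t ≥ t₀, g t ≤ -α * (t - t₀) + β) : Tendsto g atTop atBot := by
  refine tendsto_atBot_mono' atTop (eventually_ge_atTop t₀ |>.mono h) ?_
  exact tendsto_atBot_add_const_right _ β
    ((tendsto_atTop_add_const_right _ (-t₀) tendsto_id).const_mul_atTop_of_neg (by linarith))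

/-- for a piecewise continuous `μ : J → ℝ` that is periodic with period
`T > 0`, `μ` is asymptotically stable (`∫ s in t₀..t, μ s → -∞` for every `t₀ ∈ J`)
iff there is `c > 0` with `∫ s in t..(t+T), μ s ≤ -c` for all `t ∈ J`; moreover in
this case `μ` is uniformly exponentially stable, i.e. there are `α > 0`, `β ≥ 0` with
`∫ s in t₀..t, μ s ≤ -α (t - t₀) + β` for all `t ≥ t₀ ∈ J`. -/
theorem stmt3 (tsharp T : ℝ) (hT : 0 < T) (μ : ℝ → ℝ)
    (hμ : ∀ a b : ℝ, IntervalIntegrable μ MeasureTheory.volume a b)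
    (hper : ∀ t ∈ Set.Ici tsharp, μ (t + T) = μ t) :
    ((∀ t₀ ∈ Set.Ici tsharp,
        Filter.Tendsto (fun t => ∫ s in t₀..t, μ s) Filter.atTop Filter.atBot) ↔
      (∃ c : ℝ, 0 < c ∧ ∀ t ∈ Set.Ici tsharp, (∫ s in t..(t + T), μ s) ≤ -c)) ∧
    ((∃ c : ℝ, 0 < c ∧ ∀ t ∈ Set.Ici tsharp, (∫ s in t..(t + T), μ s) ≤ -c) →
      ∃ α : ℝ, 0 < α ∧ ∃ β : ℝ, 0 ≤ β ∧ ∀ t₀ ∈ Set.Ici tsharp, ∀ t ≥ t₀,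
        (∫ s in t₀..t, μ s) ≤ -α * (t - t₀) + β) := by
  set ν := periodicExtension hT tsharp μ
  have hν : Periodic ν T := periodic_periodicExtension hT tsharp μ
  have hνint := intervalIntegrable_periodicExtension (hT := hT) hper (hμ _ _)
  have hμν {a b : ℝ} (ha : a ∈ Ici tsharp) (hb : b ∈ Ici tsharp) :
      ∫ s in a..b, μ s = ∫ s in a..b, ν s :=
    integral_congr (eqOn_periodicExtension hper ha hb)
  set I := ∫ s in 0..T, ν s
  have hperiod {t : ℝ} (ht : t ∈ Ici tsharp) : ∫ s in t..t + T, μ s = I := by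
    rw [hμν ht (by simp only [mem_Ici] at ht ⊢; linarith), hν.intervalIntegral_add_eq t 0,
      zero_add]
  have ues (h : ∃ c : ℝ, 0 < c ∧ ∀ t ∈ Ici tsharp, ∫ s in t..t + T, μ s ≤ -c) :
      ∃ α : ℝ, 0 < α ∧ ∃ β : ℝ, 0 ≤ β ∧ ∀ t₀ ∈ Ici tsharp, ∀ t ≥ t₀,
        ∫ s in t₀..t, μ s ≤ -α * (t - t₀) + β := by
    obtain ⟨c, hc, hbound⟩ := h
    have hIneg : I < 0 := by linarith [hperiod self_mem_Ici ▸ hbound tsharp self_mem_Ici]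
    have hB : 0 ≤ ∫ s in 0..T, |ν s| := integral_nonneg hT.le fun s _ => abs_nonneg (ν s)
    refine ⟨-(I / T), neg_pos.mpr (div_neg_of_neg_of_pos hIneg hT),
      (∫ s in 0..T, |ν s|) - I, by linarith, ?_⟩
    intro t₀ ht₀ t ht
    rw [hμν ht₀ (mem_Ici.mpr (le_trans ht₀ ht)), neg_neg]
    exact hν.intervalIntegral_le_of_integral_nonpos hT hνint hIneg.le t₀ t
  refine ⟨⟨fun has => ⟨-I, ?_, fun t ht => (hperiod ht).trans_le (neg_neg I).ge⟩,
    fun h t₀ ht₀ => ?_⟩, ues⟩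
  · refine neg_pos.mpr (hν.integral_neg_of_tendsto_atBot hT hνint tsharp ?_)
    refine (has tsharp self_mem_Ici).congr' ?_
    filter_upwards [eventually_ge_atTop tsharp] with t ht using hμν self_mem_Ici ht
  · obtain ⟨α, hα, β, -, hbound⟩ := ues h
    exact tendsto_atBot_of_le_neg_mul_add hα (hbound t₀ ht₀)
end

section
/- (Theorem 1, Item 1) Suppose there exist a continuously differentiable V : J × ℝⁿ → [0,∞), two class-NK∞ functions α₁, α₂, and a piecewise continuous μ : J → ℝ such that α₁(t,|x|) ≤ V(t,x) ≤ α₂(t,|x|) and ∂V/∂t(t,x) + ∇ₓV(t,x)·f(t,x) ≤ μ(t)V(t,x) for all (t,x) ∈ J × ℝⁿ. If μ is asymptotically stable, i.e. lim_{t→∞} ∫_{t₀}^{t} μ(s) ds = −∞ for every t₀ ∈ J, then the system ẋ = f(t,x) is globally asymptotically stable: (a) for every t₀ ∈ J and ε > 0 there exists δ(t₀,ε) > 0 such that every solution with |x(t₀)| ≤ δ(t₀,ε) satisfies |x(t)| ≤ ε for all t ≥ t₀; and (b) every solution converges to 0 as t → ∞. -/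
open Filter MeasureTheory Set Topology

/-!
Along a solution, `v t = V t (x t)` satisfies `v' ≤ μ v` with `v ≥ 0`, so Grönwall's inequality
(integrating `(log v)' ≤ μ` where `v > 0`) gives `v t ≤ v t₀ * exp (∫ t₀..t, μ)`. Together with the
sandwich and the monotonicity of `α₁` in time this yields
`α₁ t₀ ‖x t‖ ≤ α₂ t₀ ‖x t₀‖ * exp (∫ t₀..t, μ)`. Since the integral tends to `-∞`, it is bounded
above on `[t₀, ∞)`, which gives stability, and the right-hand side tends to `0`, which gives
attractivity.
-/

theorem le_mul_exp_integral_of_pos {μ v v' : ℝ → ℝ} {a b : ℝ} (hab : a ≤ b)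
    (hv : ∀ t ∈ Icc a b, HasDerivAt v (v' t) t) (hpos : ∀ t ∈ Icc a b, 0 < v t)
    (hle : ∀ t ∈ Icc a b, v' t ≤ μ t * v t) (hμ : IntervalIntegrable μ volume a b) :
    v b ≤ v a * Real.exp (∫ s in a..b, μ s) := by
  have hlog : Real.log (v b) - Real.log (v a) ≤ ∫ s in a..b, μ s := by
    refine intervalIntegral.sub_le_integral_of_hasDeriv_right_of_le hab
      (fun t ht => ((hv t ht).continuousAt.log (hpos t ht).ne').continuousWithinAt)
      (fun t ht => ((hv t (Ioo_subset_Icc_self ht)).log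
        (hpos t (Ioo_subset_Icc_self ht)).ne').hasDerivWithinAt)
      ((intervalIntegrable_iff_integrableOn_Icc_of_le hab).mp hμ)
      (fun t ht => (div_le_iff₀ (hpos t (Ioo_subset_Icc_self ht))).mpr
        (hle t (Ioo_subset_Icc_self ht)))
  calc v b = Real.exp (Real.log (v b)) := (Real.exp_log (hpos b (right_mem_Icc.mpr hab))).symm
    _ ≤ Real.exp (Real.log (v a) + ∫ s in a..b, μ s) := Real.exp_le_exp.mpr (by linarith)
    _ = v a * Real.exp (∫ s in a..b, μ s) := by
      rw [Real.exp_add, Real.exp_log (hpos a (left_mem_Icc.mpr hab))]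

theorem le_mul_exp_integral_of_nonneg {μ v v' : ℝ → ℝ} {a b : ℝ} (hab : a ≤ b)
    (hv : ∀ t ∈ Icc a b, HasDerivAt v (v' t) t) (hnn : ∀ t ∈ Icc a b, 0 ≤ v t)
    (hle : ∀ t ∈ Icc a b, v' t ≤ μ t * v t) (hμ : IntervalIntegrable μ volume a b) :
    v b ≤ v a * Real.exp (∫ s in a..b, μ s) := by
  have hb : b ∈ Icc a b := right_mem_Icc.mpr hab
  obtain hvb | hvb := (hnn b hb).eq_or_lt
  · rw [← hvb]
    exact mul_nonneg (hnn a (left_mem_Icc.mpr hab)) (Real.exp_pos _).le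
  set Z := Icc a b ∩ v ⁻¹' {0}
  obtain hZ | hZ := Z.eq_empty_or_nonempty
  · refine le_mul_exp_integral_of_pos hab hv (fun t ht => (hnn t ht).lt_of_ne' ?_) hle hμ
    exact fun h => hZ.subset ⟨ht, h⟩
  exfalso
  -- `c` is the last zero of `v`; letting `s ↓ c` in the positive case on `[s, b]` gives `v b ≤ 0`.
  have hvc : ContinuousOn v (Icc a b) := fun t ht => (hv t ht).continuousAt.continuousWithinAt
  have hZc : IsCompact Z := isCompact_Icc.of_isClosed_subset
    (hvc.preimage_isClosed_of_isClosed isClosed_Icc isClosed_singleton) inter_subset_left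
  set c := sSup Z
  obtain ⟨hc, hvc0 : v c = 0⟩ : c ∈ Z := hZc.sSup_mem hZ
  have hcb : c < b := hc.2.lt_of_ne fun h => hvb.ne' (h ▸ hvc0)
  have hbound : ∀ s ∈ Ioc c b, v b ≤ v s * Real.exp (∫ u in s..b, μ u) := by
    intro s hs
    have hsub : Icc s b ⊆ Icc a b := Icc_subset_Icc (hc.1.trans hs.1.le) le_rfl
    refine le_mul_exp_integral_of_pos hs.2 (fun t ht => hv t (hsub ht)) (fun t ht => ?_)
      (fun t ht => hle t (hsub ht)) (hμ.mono_set (by simpa [uIcc_of_le hab, uIcc_of_le hs.2]))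
    refine (hnn t (hsub ht)).lt_of_ne' fun h => ?_
    have : t ≤ c := le_csSup hZc.bddAbove ⟨hsub ht, h⟩
    linarith [hs.1, ht.1]
  have hlim : Tendsto (fun s => v s * Real.exp (∫ u in s..b, μ u)) (𝓝[>] c)
      (𝓝 (v c * Real.exp (∫ u in c..b, μ u))) := by
    have hμcb : IntegrableOn μ (uIcc c b) := by
      rw [uIcc_of_le hcb.le, ← intervalIntegrable_iff_integrableOn_Icc_of_le hcb.le]
      exact hμ.mono_set (uIcc_subset_uIcc (mem_uIcc_of_le hc.1 hc.2) (mem_uIcc_of_le hab le_rfl))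
    have hI := intervalIntegral.continuousOn_primitive_interval_left hμcb c left_mem_uIcc
    rw [uIcc_of_le hcb.le, continuousWithinAt_Icc_iff_Ici hcb] at hI
    exact (hv c hc).continuousAt.continuousWithinAt.mul
      (hI.mono Ioi_subset_Ici_self).rexp
  have : v b ≤ 0 := by
    simpa [hvc0] using ge_of_tendsto hlim (mem_of_superset (Ioc_mem_nhdsGT hcb) hbound)
  linarith

theorem lyapunov_le_mul_exp_integral {E : Type*} [NormedAddCommGroup E] [NormedSpace ℝ E]
    {f : ℝ → E → E} {V : ℝ → E → ℝ} {μ : ℝ → ℝ} {x : ℝ → E} {t₀ t : ℝ} (ht : t₀ ≤ t)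
    (hV : Differentiable ℝ fun p : ℝ × E => V p.1 p.2)
    (hx : ∀ s ∈ Icc t₀ t, HasDerivAt x (f s (x s)) s) (hV_nonneg : ∀ s ∈ Icc t₀ t, 0 ≤ V s (x s))
    (hderiv : ∀ s ∈ Icc t₀ t,
      fderiv ℝ (fun p : ℝ × E => V p.1 p.2) (s, x s) (1, f s (x s)) ≤ μ s * V s (x s))
    (hμ : IntervalIntegrable μ volume t₀ t) :
    V t (x t) ≤ V t₀ (x t₀) * Real.exp (∫ s in t₀..t, μ s) :=
  le_mul_exp_integral_of_nonneg ht
    (fun s hs => (hV _).hasFDerivAt.comp_hasDerivAt s ((hasDerivAt_id s).prodMk (hx s hs)))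
    hV_nonneg hderiv hμ

theorem exists_forall_ge_le_of_tendsto_atBot {g : ℝ → ℝ} {a : ℝ} (hg : ContinuousOn g (Ici a))
    (hlim : Tendsto g atTop atBot) : ∃ M, ∀ t ≥ a, g t ≤ M := by
  obtain ⟨T, hT⟩ := eventually_atTop.mp (hlim.eventually_le_atBot 0)
  obtain ⟨M, hM⟩ := (isCompact_Icc (a := a) (b := T)).bddAbove_image (hg.mono Icc_subset_Ici_self)
  refine ⟨max M 0, fun t ht => ?_⟩
  rcases le_total t T with htT | hTt
  · exact (hM ⟨t, ⟨ht, htT⟩, rfl⟩).trans (le_max_left _ _)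
  · exact (hT t hTt).trans (le_max_right _ _)

theorem exists_pos_forall_norm_le_of_le_mul_exp {E : Type*} [NormedAddCommGroup E]
    {α₁ α₂ I : ℝ → ℝ} {t₀ ε : ℝ} (hα₁ : StrictMonoOn α₁ (Ici 0)) (hα₁0 : α₁ 0 = 0)
    (hα₂c : ContinuousWithinAt α₂ (Ici 0) 0) (hα₂ : MonotoneOn α₂ (Ici 0)) (hα₂0 : α₂ 0 = 0)
    (hI : ∃ M, ∀ t ≥ t₀, I t ≤ M) (hε : 0 < ε) :
    ∃ δ > 0, ∀ x : ℝ → E, (∀ t ≥ t₀, α₁ ‖x t‖ ≤ α₂ ‖x t₀‖ * Real.exp (I t)) →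
      ‖x t₀‖ ≤ δ → ∀ t ≥ t₀, ‖x t‖ ≤ ε := by
  obtain ⟨M, hM⟩ := hI
  have hα₁ε : 0 < α₁ ε := hα₁0 ▸ hα₁ self_mem_Ici hε.le hε
  have hsmall : ∀ᶠ r in 𝓝[≥] 0, α₂ r * Real.exp M < α₁ ε := by
    refine (hα₂c.mul_const (Real.exp M)).eventually (gt_mem_nhds ?_)
    simpa [hα₂0] using hα₁ε
  obtain ⟨δ, hδ, hδsmall⟩ := (mem_nhdsGE_iff_exists_Icc_subset).1 hsmall
  refine ⟨δ, hδ, fun x hx hxδ t ht => ?_⟩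
  have hα₂x : 0 ≤ α₂ ‖x t₀‖ := hα₂0 ▸ hα₂ self_mem_Ici (norm_nonneg _) (norm_nonneg _)
  have : α₁ ‖x t‖ < α₁ ε := calc
    α₁ ‖x t‖ ≤ α₂ ‖x t₀‖ * Real.exp (I t) := hx t ht
    _ ≤ α₂ ‖x t₀‖ * Real.exp M := by gcongr; exact hM t ht
    _ < α₁ ε := hδsmall ⟨norm_nonneg _, hxδ⟩
  exact ((hα₁.lt_iff_lt (norm_nonneg _) hε.le).1 this).le

theorem tendsto_zero_of_le_mul_exp {E : Type*} [NormedAddCommGroup E] {α₁ I : ℝ → ℝ} {c : ℝ}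
    {x : ℝ → E} (hα₁ : StrictMonoOn α₁ (Ici 0)) (hα₁0 : α₁ 0 = 0)
    (hI : Tendsto I atTop atBot) (hx : ∀ᶠ t in atTop, α₁ ‖x t‖ ≤ c * Real.exp (I t)) :
    Tendsto x atTop (𝓝 0) := by
  rw [tendsto_zero_iff_norm_tendsto_zero, Metric.tendsto_nhds]
  intro ε hε
  have hα₁ε : 0 < α₁ ε := hα₁0 ▸ hα₁ self_mem_Ici hε.le hε
  have hbound : Tendsto (fun t => c * Real.exp (I t)) atTop (𝓝 0) := by
    simpa using (Real.tendsto_exp_atBot.comp hI).const_mul c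
  filter_upwards [hx, hbound.eventually (gt_mem_nhds hα₁ε)] with t hxt hct
  rw [Real.dist_eq, sub_zero, abs_norm]
  exact (hα₁.lt_iff_lt (norm_nonneg _) hε.le).1 (hxt.trans_lt hct)

theorem stmt4_general (tsharp : ℝ) (n : ℕ)
    (f : ℝ → EuclideanSpace ℝ (Fin n) → EuclideanSpace ℝ (Fin n))
    (V : ℝ → EuclideanSpace ℝ (Fin n) → ℝ)
    (hV_C1 : ContDiff ℝ 1 fun p : ℝ × EuclideanSpace ℝ (Fin n) => V p.1 p.2)
    (hV_nonneg : ∀ t ∈ Set.Ici tsharp, ∀ x : EuclideanSpace ℝ (Fin n), 0 ≤ V t x)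
    (α₁ α₂ : ℝ → ℝ → ℝ)
    -- `α₁, α₂` are of class `NK∞` : for each fixed `t ∈ J`, `s ↦ αᵢ t s` is of class `K∞`
    (hα₁K : ∀ t ∈ Set.Ici tsharp, ContinuousOn (α₁ t) (Set.Ici 0) ∧
        StrictMonoOn (α₁ t) (Set.Ici 0) ∧ α₁ t 0 = 0 ∧
        Filter.Tendsto (α₁ t) Filter.atTop Filter.atTop)
    (hα₂K : ∀ t ∈ Set.Ici tsharp, ContinuousOn (α₂ t) (Set.Ici 0) ∧
        StrictMonoOn (α₂ t) (Set.Ici 0) ∧ α₂ t 0 = 0 ∧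
        Filter.Tendsto (α₂ t) Filter.atTop Filter.atTop)
    -- and for each fixed `s ≥ 0`, `t ↦ αᵢ t s` is nondecreasing on `J`
    (hα₁N : ∀ s ≥ (0:ℝ), MonotoneOn (fun t => α₁ t s) (Set.Ici tsharp))
    (μ : ℝ → ℝ)
    (hμ_int : ∀ a b : ℝ, IntervalIntegrable μ MeasureTheory.volume a b)
    (hsandwich : ∀ t ∈ Set.Ici tsharp, ∀ x : EuclideanSpace ℝ (Fin n),
        α₁ t ‖x‖ ≤ V t x ∧ V t x ≤ α₂ t ‖x‖)
    (hderiv : ∀ t ∈ Set.Ici tsharp, ∀ x : EuclideanSpace ℝ (Fin n),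
        (fderiv ℝ (fun p : ℝ × EuclideanSpace ℝ (Fin n) => V p.1 p.2) (t, x)) (1, f t x)
          ≤ μ t * V t x)
    (hμ_as : ∀ t₀ ∈ Set.Ici tsharp,
        Filter.Tendsto (fun t => ∫ s in t₀..t, μ s) Filter.atTop Filter.atBot) :
    -- (a) Lyapunov stability
    (∀ t₀ ∈ Set.Ici tsharp, ∀ ε > (0:ℝ), ∃ δ > (0:ℝ),
        ∀ x : ℝ → EuclideanSpace ℝ (Fin n),
          (∀ t ≥ t₀, HasDerivAt x (f t (x t)) t) →
          ‖x t₀‖ ≤ δ → ∀ t ≥ t₀, ‖x t‖ ≤ ε) ∧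
    -- (b) global attractivity
    (∀ t₀ ∈ Set.Ici tsharp, ∀ x : ℝ → EuclideanSpace ℝ (Fin n),
        (∀ t ≥ t₀, HasDerivAt x (f t (x t)) t) →
        Filter.Tendsto x Filter.atTop (nhds 0)) := by
  have hV : Differentiable ℝ fun p : ℝ × EuclideanSpace ℝ (Fin n) => V p.1 p.2 :=
    hV_C1.differentiable one_ne_zero
  have hbound : ∀ t₀ ∈ Ici tsharp, ∀ x : ℝ → EuclideanSpace ℝ (Fin n),
      (∀ t ≥ t₀, HasDerivAt x (f t (x t)) t) →
      ∀ t ≥ t₀, α₁ t₀ ‖x t‖ ≤ α₂ t₀ ‖x t₀‖ * Real.exp (∫ s in t₀..t, μ s) := by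
    intro t₀ ht₀ x hx t ht
    have hJ : ∀ s ∈ Icc t₀ t, s ∈ Ici tsharp := fun s hs => le_trans ht₀ hs.1
    calc α₁ t₀ ‖x t‖ ≤ α₁ t ‖x t‖ := hα₁N _ (norm_nonneg _) ht₀ (hJ t ⟨ht, le_rfl⟩) ht
      _ ≤ V t (x t) := (hsandwich t (hJ t ⟨ht, le_rfl⟩) _).1
      _ ≤ V t₀ (x t₀) * Real.exp (∫ s in t₀..t, μ s) :=
        lyapunov_le_mul_exp_integral ht hV (fun s hs => hx s hs.1)
          (fun s hs => hV_nonneg s (hJ s hs) _) (fun s hs => hderiv s (hJ s hs) _) (hμ_int _ _)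
      _ ≤ α₂ t₀ ‖x t₀‖ * Real.exp (∫ s in t₀..t, μ s) := by
        gcongr
        exact (hsandwich t₀ ht₀ _).2
  refine ⟨fun t₀ ht₀ ε hε => ?_, fun t₀ ht₀ x hx => ?_⟩
  · obtain ⟨-, hα₁, hα₁0, -⟩ := hα₁K t₀ ht₀
    obtain ⟨hα₂c, hα₂, hα₂0, -⟩ := hα₂K t₀ ht₀
    obtain ⟨δ, hδ, hstable⟩ :=
      exists_pos_forall_norm_le_of_le_mul_exp (E := EuclideanSpace ℝ (Fin n)) hα₁ hα₁0
        (hα₂c 0 self_mem_Ici) hα₂.monotoneOn hα₂0 (exists_forall_ge_le_of_tendsto_atBot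
          (intervalIntegral.continuous_primitive hμ_int t₀).continuousOn (hμ_as t₀ ht₀)) hε
    exact ⟨δ, hδ, fun x hx => hstable x (hbound t₀ ht₀ x hx)⟩
  · obtain ⟨-, hα₁, hα₁0, -⟩ := hα₁K t₀ ht₀
    exact tendsto_zero_of_le_mul_exp hα₁ hα₁0 (hμ_as t₀ ht₀)
      ((eventually_ge_atTop t₀).mono (hbound t₀ ht₀ x hx))

/-- Theorem 1, Item 1: if there are a `C¹` nonnegative `V`, class-`NK∞`
functions `α₁, α₂` sandwiching `V`, and a piecewise continuous `μ` with
`∂V/∂t + ∇ₓV ⬝ f ≤ μ V` on `J × ℝⁿ`, and `μ` is asymptotically stable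
(`∫ s in t₀..t, μ s → -∞` for every `t₀ ∈ J`), then `ẋ = f(t,x)` is globally
asymptotically stable: Lyapunov stability plus global attractivity. -/
theorem stmt4 (tsharp : ℝ) (n : ℕ)
    (f : ℝ → EuclideanSpace ℝ (Fin n) → EuclideanSpace ℝ (Fin n))
    (hf_cont : Continuous fun p : ℝ × EuclideanSpace ℝ (Fin n) => f p.1 p.2)
    (hf_lip : ∀ t, LocallyLipschitz (f t))
    (hf0 : ∀ t ∈ Set.Ici tsharp, f t (0 : EuclideanSpace ℝ (Fin n)) = 0)
    (V : ℝ → EuclideanSpace ℝ (Fin n) → ℝ)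
    (hV_C1 : ContDiff ℝ 1 fun p : ℝ × EuclideanSpace ℝ (Fin n) => V p.1 p.2)
    (hV_nonneg : ∀ t ∈ Set.Ici tsharp, ∀ x : EuclideanSpace ℝ (Fin n), 0 ≤ V t x)
    (α₁ α₂ : ℝ → ℝ → ℝ)
    -- `α₁, α₂` are of class `NK∞` : for each fixed `t ∈ J`, `s ↦ αᵢ t s` is of class `K∞`
    (hα₁K : ∀ t ∈ Set.Ici tsharp, ContinuousOn (α₁ t) (Set.Ici 0) ∧
        StrictMonoOn (α₁ t) (Set.Ici 0) ∧ α₁ t 0 = 0 ∧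
        Filter.Tendsto (α₁ t) Filter.atTop Filter.atTop)
    (hα₂K : ∀ t ∈ Set.Ici tsharp, ContinuousOn (α₂ t) (Set.Ici 0) ∧
        StrictMonoOn (α₂ t) (Set.Ici 0) ∧ α₂ t 0 = 0 ∧
        Filter.Tendsto (α₂ t) Filter.atTop Filter.atTop)
    -- and for each fixed `s ≥ 0`, `t ↦ αᵢ t s` is nondecreasing on `J`
    (hα₁N : ∀ s ≥ (0:ℝ), MonotoneOn (fun t => α₁ t s) (Set.Ici tsharp))
    (hα₂N : ∀ s ≥ (0:ℝ), MonotoneOn (fun t => α₂ t s) (Set.Ici tsharp))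
    (μ : ℝ → ℝ)
    (hμ_int : ∀ a b : ℝ, IntervalIntegrable μ MeasureTheory.volume a b)
    (hsandwich : ∀ t ∈ Set.Ici tsharp, ∀ x : EuclideanSpace ℝ (Fin n),
        α₁ t ‖x‖ ≤ V t x ∧ V t x ≤ α₂ t ‖x‖)
    (hderiv : ∀ t ∈ Set.Ici tsharp, ∀ x : EuclideanSpace ℝ (Fin n),
        (fderiv ℝ (fun p : ℝ × EuclideanSpace ℝ (Fin n) => V p.1 p.2) (t, x)) (1, f t x)
          ≤ μ t * V t x)
    (hμ_as : ∀ t₀ ∈ Set.Ici tsharp,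
        Filter.Tendsto (fun t => ∫ s in t₀..t, μ s) Filter.atTop Filter.atBot) :
    -- (a) Lyapunov stability
    (∀ t₀ ∈ Set.Ici tsharp, ∀ ε > (0:ℝ), ∃ δ > (0:ℝ),
        ∀ x : ℝ → EuclideanSpace ℝ (Fin n),
          (∀ t ≥ t₀, HasDerivAt x (f t (x t)) t) →
          ‖x t₀‖ ≤ δ → ∀ t ≥ t₀, ‖x t‖ ≤ ε) ∧
    -- (b) global attractivity
    (∀ t₀ ∈ Set.Ici tsharp, ∀ x : ℝ → EuclideanSpace ℝ (Fin n),
        (∀ t ≥ t₀, HasDerivAt x (f t (x t)) t) →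
        Filter.Tendsto x Filter.atTop (nhds 0)) :=
  stmt4_general tsharp n f V hV_C1 hV_nonneg α₁ α₂ hα₁K hα₂K hα₁N μ hμ_int hsandwich hderiv hμ_as
end

section
/- (Theorem 1, Item 3) Suppose there exist a continuously differentiable V : J × ℝⁿ → [0,∞), a constant m > 0, two positive nondecreasing functions k₁, k₂ : J → (0,∞), and a piecewise continuous μ : J → ℝ such that k₁(t)|x|^m ≤ V(t,x) ≤ k₂(t)|x|^m and ∂V/∂t(t,x) + ∇ₓV(t,x)·f(t,x) ≤ μ(t)V(t,x) for all (t,x) ∈ J × ℝⁿ. If μ is exponentially stable, i.e. there exist α > 0 and β(t₀) ≥ 0 with ∫_{t₀}^{t} μ(s) ds ≤ −α(t−t₀) + β(t₀) for all t ≥ t₀ ∈ J, then every solution of ẋ = f(t,x) satisfies |x(t)| ≤ (k₂(t₀)/k₁(t₀))^{1/m}·exp(β(t₀)/m)·|x(t₀)|·exp(−(α/m)(t−t₀)) for all t ≥ t₀ ∈ J; in particular the system is globally exponentially stable. -/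
/-! Along a solution, `v s = V s (x s)` satisfies `v' ≤ μ v`. On an interval where `v > 0`,
integrating `(log v)' ≤ μ` gives `v t ≤ v s * exp (∫ s..t, μ)`. A zero of `v` before a time where
`v > 0` is impossible: applying that bound on `[s, t]` and letting `s` decrease to the last zero
would force `v t ≤ 0`. The sandwich bounds, the monotonicity of `k₁` and the exponential stability
of `μ` then turn `v t ≤ v t₀ * exp (∫ t₀..t, μ)` into the estimate on `‖x t‖` by taking `m`-th
roots. -/

open Filter MeasureTheory Set Real Topology

section Gronwall

variable {g g' μ : ℝ → ℝ} {a b : ℝ}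

theorem le_mul_exp_integral_of_deriv_le_mul_of_pos (hab : a ≤ b)
    (hderiv : ∀ u ∈ Icc a b, HasDerivAt g (g' u) u) (hpos : ∀ u ∈ Icc a b, 0 < g u)
    (hle : ∀ u ∈ Icc a b, g' u ≤ μ u * g u) (hμ : IntervalIntegrable μ volume a b) :
    g b ≤ g a * exp (∫ u in a..b, μ u) := by
  have hlog : log (g b) - log (g a) ≤ ∫ u in a..b, μ u := by
    refine intervalIntegral.sub_le_integral_of_hasDeriv_right_of_le (g := fun u => log (g u))
      (g' := fun u => g' u / g u) hab ?_ (fun u hu => ?_)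
      ((intervalIntegrable_iff_integrableOn_Icc_of_le hab enorm_ne_top).1 hμ) (fun u hu => ?_)
    · exact fun u hu => ((hderiv u hu).continuousAt.log (hpos u hu).ne').continuousWithinAt
    · have hu := Ioo_subset_Icc_self hu
      exact ((hderiv u hu).log (hpos u hu).ne').hasDerivWithinAt
    · have hu := Ioo_subset_Icc_self hu
      rw [div_le_iff₀ (hpos u hu)]
      exact hle u hu
  calc g b = exp (log (g b)) := (exp_log (hpos b ⟨hab, le_rfl⟩)).symm
    _ ≤ exp (log (g a) + ∫ u in a..b, μ u) := exp_le_exp.2 (by linarith)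
    _ = g a * exp (∫ u in a..b, μ u) := by rw [exp_add, exp_log (hpos a ⟨le_rfl, hab⟩)]

theorem pos_of_deriv_le_mul_of_pos_right (hab : a ≤ b)
    (hderiv : ∀ u ∈ Icc a b, HasDerivAt g (g' u) u) (hle : ∀ u ∈ Icc a b, g' u ≤ μ u * g u)
    (hμ : IntervalIntegrable μ volume a b) (hb : 0 < g b) : ∀ u ∈ Icc a b, 0 < g u := by
  by_contra! hzero
  have hcont : ContinuousOn g (Icc a b) := fun u hu =>
    (hderiv u hu).continuousAt.continuousWithinAt
  set Z := Icc a b ∩ g ⁻¹' Iic 0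
  have hZ_closed : IsClosed Z := hcont.preimage_isClosed_of_isClosed isClosed_Icc isClosed_Iic
  have hZ_bdd : BddAbove Z := bddAbove_Icc.mono inter_subset_left
  obtain ⟨u₀, hu₀, hgu₀⟩ := hzero
  set c := sSup Z
  obtain ⟨hc_mem, hgc : g c ≤ 0⟩ : c ∈ Z := hZ_closed.csSup_mem ⟨u₀, hu₀, hgu₀⟩ hZ_bdd
  have hcb : c < b := hc_mem.2.lt_of_ne fun h => hgc.not_gt (h ▸ hb)
  have hpos : ∀ s ∈ Ioc c b, ∀ u ∈ Icc s b, 0 < g u := fun s hs u hu =>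
    lt_of_not_ge fun h => (hs.1.trans_le hu.1).not_ge
      (le_csSup hZ_bdd ⟨⟨hc_mem.1.trans (hs.1.trans_le hu.1).le, hu.2⟩, h⟩)
  have hbound : ∀ᶠ s in 𝓝[>] c, g b ≤ g s * exp (∫ u in s..b, μ u) := by
    filter_upwards [Ioc_mem_nhdsGT hcb] with s hs
    have hsub : Icc s b ⊆ Icc a b := Icc_subset_Icc_left (hc_mem.1.trans hs.1.le)
    exact le_mul_exp_integral_of_deriv_le_mul_of_pos hs.2 (fun u hu => hderiv u (hsub hu))
      (hpos s hs) (fun u hu => hle u (hsub hu))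
      (hμ.mono_set (by simpa [uIcc_of_le, hs.2, hab] using hsub))
  have hlim : Tendsto (fun s => g s * exp (∫ u in s..b, μ u)) (𝓝[>] c)
      (𝓝 (g c * exp (∫ u in c..b, μ u))) := by
    have hprim : ContinuousOn (fun s => ∫ u in s..b, μ u) (Icc a b) := by
      simpa only [uIcc_of_le hab] using intervalIntegral.continuousOn_primitive_interval_left
        ((intervalIntegrable_iff' enorm_ne_top).1 hμ)
    exact ((hcont.mul (continuous_exp.comp_continuousOn hprim)) c hc_mem).mono_of_mem_nhdsWithin
      (Icc_mem_nhdsGT_of_mem ⟨hc_mem.1, hcb⟩) |>.tendsto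
  exact ((ge_of_tendsto hlim hbound).trans
    (mul_nonpos_of_nonpos_of_nonneg hgc (exp_pos _).le)).not_gt hb

theorem le_mul_exp_integral_of_deriv_le_mul (hab : a ≤ b)
    (hderiv : ∀ u ∈ Icc a b, HasDerivAt g (g' u) u) (ha : 0 ≤ g a)
    (hle : ∀ u ∈ Icc a b, g' u ≤ μ u * g u) (hμ : IntervalIntegrable μ volume a b) :
    g b ≤ g a * exp (∫ u in a..b, μ u) := by
  rcases le_or_gt (g b) 0 with hb | hb
  · exact hb.trans (mul_nonneg ha (exp_pos _).le)
  · exact le_mul_exp_integral_of_deriv_le_mul_of_pos hab hderiv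
      (pos_of_deriv_le_mul_of_pos_right hab hderiv hle hμ hb) hle hμ

end Gronwall

theorem DifferentiableAt.hasDerivAt_uncurry_comp {E F : Type*} [NormedAddCommGroup E]
    [NormedSpace ℝ E] [NormedAddCommGroup F] [NormedSpace ℝ F] {V : ℝ → E → F} {x : ℝ → E}
    {x' : E} {t : ℝ} (hV : DifferentiableAt ℝ (fun p : ℝ × E => V p.1 p.2) (t, x t))
    (hx : HasDerivAt x x' t) :
    HasDerivAt (fun s => V s (x s)) (fderiv ℝ (fun p : ℝ × E => V p.1 p.2) (t, x t) (1, x')) t :=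
  hV.hasFDerivAt.comp_hasDerivAt (f := fun s => (s, x s)) t ((hasDerivAt_id' t).prodMk hx)

theorem le_of_mul_rpow_le_mul_rpow_mul_exp {k₁ k₂ m A B E : ℝ} (hk₁ : 0 < k₁) (hk₂ : 0 ≤ k₂)
    (hm : 0 < m) (hA : 0 ≤ A) (hB : 0 ≤ B) (h : k₁ * A ^ m ≤ k₂ * B ^ m * exp E) :
    A ≤ (k₂ / k₁) ^ (1 / m) * exp (E / m) * B := by
  have hk : 0 ≤ k₂ / k₁ := div_nonneg hk₂ hk₁.le
  rw [← rpow_le_rpow_iff hA (by positivity) hm, mul_rpow (by positivity) hB,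
    mul_rpow (by positivity) (exp_pos _).le, ← rpow_mul hk, one_div_mul_cancel hm.ne', rpow_one,
    ← exp_mul, div_mul_cancel₀ _ hm.ne', div_mul_eq_mul_div, div_mul_eq_mul_div,
    le_div_iff₀ hk₁]
  linarith

theorem stmt6_general (tsharp : ℝ) (n : ℕ)
    (f : ℝ → EuclideanSpace ℝ (Fin n) → EuclideanSpace ℝ (Fin n))
    (V : ℝ → EuclideanSpace ℝ (Fin n) → ℝ)
    (hV_C1 : ContDiff ℝ 1 fun p : ℝ × EuclideanSpace ℝ (Fin n) => V p.1 p.2)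
    (hV_nonneg : ∀ t ∈ Set.Ici tsharp, ∀ x : EuclideanSpace ℝ (Fin n), 0 ≤ V t x)
    (m : ℝ) (hm : 0 < m)
    (k₁ k₂ : ℝ → ℝ)
    (hk₁_pos : ∀ t ∈ Set.Ici tsharp, 0 < k₁ t) (hk₁_mono : MonotoneOn k₁ (Set.Ici tsharp))
    (hk₂_pos : ∀ t ∈ Set.Ici tsharp, 0 < k₂ t)
    (μ : ℝ → ℝ)
    (hμ_int : ∀ a b : ℝ, IntervalIntegrable μ MeasureTheory.volume a b)
    (hsandwich : ∀ t ∈ Set.Ici tsharp, ∀ x : EuclideanSpace ℝ (Fin n),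
        k₁ t * ‖x‖ ^ m ≤ V t x ∧ V t x ≤ k₂ t * ‖x‖ ^ m)
    (hderiv : ∀ t ∈ Set.Ici tsharp, ∀ x : EuclideanSpace ℝ (Fin n),
        (fderiv ℝ (fun p : ℝ × EuclideanSpace ℝ (Fin n) => V p.1 p.2) (t, x)) (1, f t x)
          ≤ μ t * V t x)
    (α : ℝ) (β : ℝ → ℝ)
    (hμ_es : ∀ t₀ ∈ Set.Ici tsharp, ∀ t ≥ t₀,
        (∫ s in t₀..t, μ s) ≤ -α * (t - t₀) + β t₀) :
    ∀ t₀ ∈ Set.Ici tsharp, ∀ x : ℝ → EuclideanSpace ℝ (Fin n),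
      (∀ t ≥ t₀, HasDerivAt x (f t (x t)) t) →
      ∀ t ≥ t₀, ‖x t‖ ≤ (k₂ t₀ / k₁ t₀) ^ (1 / m) * Real.exp (β t₀ / m) * ‖x t₀‖ *
        Real.exp (-(α / m) * (t - t₀)) := by
  intro t₀ ht₀ x hx t ht
  have hJ : ∀ u ∈ Icc t₀ t, u ∈ Ici tsharp := fun u hu => mem_Ici.2 (ht₀.trans hu.1)
  have hV_decay : V t (x t) ≤ V t₀ (x t₀) * exp (∫ s in t₀..t, μ s) :=
    le_mul_exp_integral_of_deriv_le_mul ht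
      (fun u hu => (hV_C1.differentiable one_ne_zero _).hasDerivAt_uncurry_comp (hx u hu.1))
      (hV_nonneg t₀ ht₀ (x t₀))
      (fun u hu => hderiv u (hJ u hu) (x u)) (hμ_int t₀ t)
  have hbound : k₁ t₀ * ‖x t‖ ^ m ≤ k₂ t₀ * ‖x t₀‖ ^ m * exp (-α * (t - t₀) + β t₀) :=
    calc k₁ t₀ * ‖x t‖ ^ m ≤ k₁ t * ‖x t‖ ^ m := by
          gcongr; exact hk₁_mono ht₀ (hJ t ⟨ht, le_rfl⟩) ht
      _ ≤ V t (x t) := (hsandwich t (hJ t ⟨ht, le_rfl⟩) (x t)).1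
      _ ≤ V t₀ (x t₀) * exp (∫ s in t₀..t, μ s) := hV_decay
      _ ≤ k₂ t₀ * ‖x t₀‖ ^ m * exp (-α * (t - t₀) + β t₀) := by
          have hV₀ := hsandwich t₀ ht₀ (x t₀)
          exact mul_le_mul hV₀.2 (exp_le_exp.2 (hμ_es t₀ ht₀ t ht)) (exp_pos _).le
            ((hV_nonneg t₀ ht₀ (x t₀)).trans hV₀.2)
  calc ‖x t‖ ≤ (k₂ t₀ / k₁ t₀) ^ (1 / m) * exp ((-α * (t - t₀) + β t₀) / m) * ‖x t₀‖ :=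
        le_of_mul_rpow_le_mul_rpow_mul_exp (hk₁_pos t₀ ht₀) (hk₂_pos t₀ ht₀).le hm
          (norm_nonneg _) (norm_nonneg _) hbound
    _ = _ := by
      rw [add_div, exp_add, show -α * (t - t₀) / m = -(α / m) * (t - t₀) by ring]
      ring

/-- Theorem 1, Item 3: with bounds `k₁(t)|x|^m ≤ V(t,x) ≤ k₂(t)|x|^m`
(`k₁, k₂` positive and nondecreasing on `J`, `m > 0`) and `V̇ ≤ μ(t) V`, if `μ` is
exponentially stable with rate `α > 0` and offset `β(t₀) ≥ 0`, then every solution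
satisfies `|x(t)| ≤ (k₂(t₀)/k₁(t₀))^{1/m} e^{β(t₀)/m} |x(t₀)| e^{-(α/m)(t-t₀)}`;
in particular the system is globally exponentially stable. -/
theorem stmt6 (tsharp : ℝ) (n : ℕ)
    (f : ℝ → EuclideanSpace ℝ (Fin n) → EuclideanSpace ℝ (Fin n))
    (hf_cont : Continuous fun p : ℝ × EuclideanSpace ℝ (Fin n) => f p.1 p.2)
    (hf_lip : ∀ t, LocallyLipschitz (f t))
    (hf0 : ∀ t ∈ Set.Ici tsharp, f t (0 : EuclideanSpace ℝ (Fin n)) = 0)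
    (V : ℝ → EuclideanSpace ℝ (Fin n) → ℝ)
    (hV_C1 : ContDiff ℝ 1 fun p : ℝ × EuclideanSpace ℝ (Fin n) => V p.1 p.2)
    (hV_nonneg : ∀ t ∈ Set.Ici tsharp, ∀ x : EuclideanSpace ℝ (Fin n), 0 ≤ V t x)
    (m : ℝ) (hm : 0 < m)
    (k₁ k₂ : ℝ → ℝ)
    (hk₁_pos : ∀ t ∈ Set.Ici tsharp, 0 < k₁ t) (hk₁_mono : MonotoneOn k₁ (Set.Ici tsharp))
    (hk₂_pos : ∀ t ∈ Set.Ici tsharp, 0 < k₂ t) (hk₂_mono : MonotoneOn k₂ (Set.Ici tsharp))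
    (μ : ℝ → ℝ)
    (hμ_int : ∀ a b : ℝ, IntervalIntegrable μ MeasureTheory.volume a b)
    (hsandwich : ∀ t ∈ Set.Ici tsharp, ∀ x : EuclideanSpace ℝ (Fin n),
        k₁ t * ‖x‖ ^ m ≤ V t x ∧ V t x ≤ k₂ t * ‖x‖ ^ m)
    (hderiv : ∀ t ∈ Set.Ici tsharp, ∀ x : EuclideanSpace ℝ (Fin n),
        (fderiv ℝ (fun p : ℝ × EuclideanSpace ℝ (Fin n) => V p.1 p.2) (t, x)) (1, f t x)
          ≤ μ t * V t x)
    (α : ℝ) (hα : 0 < α) (β : ℝ → ℝ) (hβ : ∀ t₀ ∈ Set.Ici tsharp, 0 ≤ β t₀)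
    (hμ_es : ∀ t₀ ∈ Set.Ici tsharp, ∀ t ≥ t₀,
        (∫ s in t₀..t, μ s) ≤ -α * (t - t₀) + β t₀) :
    ∀ t₀ ∈ Set.Ici tsharp, ∀ x : ℝ → EuclideanSpace ℝ (Fin n),
      (∀ t ≥ t₀, HasDerivAt x (f t (x t)) t) →
      ∀ t ≥ t₀, ‖x t‖ ≤ (k₂ t₀ / k₁ t₀) ^ (1 / m) * Real.exp (β t₀ / m) * ‖x t₀‖ *
        Real.exp (-(α / m) * (t - t₀)) :=
  stmt6_general tsharp n f V hV_C1 hV_nonneg m hm k₁ k₂ hk₁_pos hk₁_mono hk₂_pos μ hμ_int hsandwich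
    hderiv α β hμ_es
end

section
/- (Theorem 2) Suppose there exist a continuously differentiable V : J × ℝⁿ → [0,∞), two class-NK∞ functions α₁, α₂, an asymptotically stable piecewise continuous μ : J → ℝ (i.e., lim_{t→∞} ∫_{t₀}^{t} μ(s) ds = −∞ for every t₀ ∈ J), and a piecewise continuous π : J → [0,∞) such that α₁(t,|x|) ≤ V(t,x) ≤ α₂(t,|x|) and ∂V/∂t(t,x) + ∇ₓV(t,x)·f(t,x) ≤ μ(t)V(t,x) + π(t) for all (t,x) ∈ J × ℝⁿ. Let φ(t,s) = exp(∫_{s}^{t} μ(ω) dω) and κ(t,t₀) = ∫_{t₀}^{t} φ(t,s)π(s) ds. If for every t₀ ∈ J the function t ↦ κ(t,t₀) is bounded on [t₀,∞) and lim_{t→∞} κ(t,t₀) = 0, then every solution x of ẋ = f(t,x) satisfies α₁(t₀,|x(t)|) ≤ V(t₀,x(t₀))φ(t,t₀) + κ(t,t₀) for all t ≥ t₀, is bounded on [t₀,∞), and converges to 0 as t → ∞; in particular the system is globally attractive and Lagrange stable. -/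
open Filter MeasureTheory Set Topology

/-! Along a solution, `v t = V(t, x t)` satisfies `v' ≤ μ v + π`. As `μ` is only locally
integrable, the integrating factor `exp (-∫ μ)` is merely absolutely continuous, so the comparison
`v t ≤ v t₀ φ(t,t₀) + κ(t,t₀)` comes from the fundamental theorem of calculus for the absolutely
continuous function `v · exp (-∫ μ)`. Since `α₁(t₀,·) ≤ α₁(t,·) ≤ V(t,·)` and both terms of the
right-hand side tend to `0`, the strict monotonicity of `α₁(t₀,·)` forces `‖x t‖ → 0`, and a
continuous function with a limit at `∞` is bounded. -/

theorem LipschitzOnWith.comp_absolutelyContinuousOnInterval {X Y : Type*}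
    [PseudoMetricSpace X] [PseudoMetricSpace Y] {g : X → Y} {K : NNReal} {s : Set X}
    {f : ℝ → X} {a b : ℝ} (hg : LipschitzOnWith K g s)
    (hf : AbsolutelyContinuousOnInterval f a b)
    (hfs : MapsTo f (uIcc a b) s) : AbsolutelyContinuousOnInterval (g ∘ f) a b := by
  rw [absolutelyContinuousOnInterval_iff] at hf ⊢
  intro ε hε
  obtain ⟨δ, hδ, hfδ⟩ := hf (ε / (K + 1)) (by positivity)
  refine ⟨δ, hδ, fun E hE hEδ => ?_⟩
  calc ∑ i ∈ Finset.range E.1, dist ((g ∘ f) (E.2 i).1) ((g ∘ f) (E.2 i).2)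
      ≤ ∑ i ∈ Finset.range E.1, K * dist (f (E.2 i).1) (f (E.2 i).2) := by
        gcongr with i hi
        exact hg.dist_le_mul _ (hfs (hE.1 i hi).1) _ (hfs (hE.1 i hi).2)
    _ = K * ∑ i ∈ Finset.range E.1, dist (f (E.2 i).1) (f (E.2 i).2) := by
        rw [Finset.mul_sum]
    _ ≤ K * (ε / (K + 1)) := by gcongr; exact (hfδ E hE hEδ).le
    _ < (K + 1) * (ε / (K + 1)) := by gcongr; linarith
    _ = ε := by field_simp

theorem AbsolutelyContinuousOnInterval.rexp {f : ℝ → ℝ} {a b : ℝ}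
    (hf : AbsolutelyContinuousOnInterval f a b) :
    AbsolutelyContinuousOnInterval (fun s => Real.exp (f s)) a b := by
  obtain ⟨C, hC⟩ := hf.exists_bound
  obtain ⟨K, hK⟩ := Real.contDiff_exp.contDiffOn.exists_lipschitzOnWith one_ne_zero
    (convex_Icc (-C) C) isCompact_Icc
  exact hK.comp_absolutelyContinuousOnInterval hf fun s hs => abs_le.mp (hC s hs)

theorem absolutelyContinuousOnInterval_of_hasDerivAt {E : Type*} [NormedAddCommGroup E]
    [NormedSpace ℝ E] {v v' : ℝ → E} {a b : ℝ}
    (hv : ∀ s ∈ uIcc a b, HasDerivAt v (v' s) s) (hv' : ContinuousOn v' (uIcc a b)) :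
    AbsolutelyContinuousOnInterval v a b := by
  obtain ⟨C, hC⟩ := isCompact_uIcc.exists_bound_of_continuousOn hv'
  refine LipschitzOnWith.absolutelyContinuousOnInterval (K := ⟨max C 0, le_max_right _ _⟩) ?_
  exact (convex_uIcc a b).lipschitzOnWith_of_nnnorm_hasDerivWithin_le
    (fun s hs => (hv s hs).hasDerivWithinAt) fun s hs => (hC s hs).trans (le_max_left _ _)

theorem AbsolutelyContinuousOnInterval.le_mul_exp_integral_add_of_deriv_le
    {v μ π : ℝ → ℝ} {a b : ℝ} (hab : a ≤ b) (hv : AbsolutelyContinuousOnInterval v a b)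
    (hμ : IntervalIntegrable μ volume a b) (hπ : IntervalIntegrable π volume a b)
    (hineq : ∀ᵐ s, s ∈ Icc a b → deriv v s ≤ μ s * v s + π s) :
    v b ≤ v a * Real.exp (∫ u in a..b, μ u)
      + ∫ s in a..b, Real.exp (∫ u in s..b, μ u) * π s := by
  set F : ℝ → ℝ := fun s => ∫ u in a..s, μ u
  set E : ℝ → ℝ := fun s => Real.exp (-F s)
  have ha : a ∈ uIcc a b := left_mem_uIcc
  have hE : AbsolutelyContinuousOnInterval E a b :=
    (hμ.absolutelyContinuousOnInterval_intervalIntegral ha).neg.rexp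
  have hvE := hv.fun_mul hE
  have hderiv : ∀ᵐ s, s ∈ Icc a b → deriv (fun s => v s * E s) s ≤ E s * π s := by
    filter_upwards [hv.ae_differentiableAt, hμ.ae_hasDerivAt_integral, hineq]
      with s hvs hFs hs hsI
    have hsI' : s ∈ uIcc a b := uIcc_of_le hab ▸ hsI
    have hEs : HasDerivAt E (E s * -μ s) s := (hFs hsI' a ha).neg.exp
    rw [((hvs hsI').hasDerivAt.fun_mul hEs).deriv]
    have := mul_le_mul_of_nonneg_left (hs hsI) (Real.exp_pos (-F s)).le
    linarith
  have hmain : v b * E b - v a ≤ ∫ s in a..b, E s * π s := by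
    have h1 : v a * E a = v a := by simp [E, F]
    rw [← h1, ← hvE.integral_deriv_eq_sub]
    exact intervalIntegral.integral_mono_ae_restrict hab hvE.intervalIntegrable_deriv
      (hπ.continuousOn_mul hE.continuousOn) ((ae_restrict_iff' measurableSet_Icc).2 hderiv)
  have hEb : E b * Real.exp (F b) = 1 := by simp [E, ← Real.exp_add]
  have hφ : ∀ s ∈ uIcc a b, E s * π s * Real.exp (F b) = Real.exp (∫ u in s..b, μ u) * π s := by
    intro s hs
    rw [← intervalIntegral.integral_interval_sub_left hμ
      (hμ.mono_set (uIcc_subset_uIcc_left hs)), mul_right_comm, ← Real.exp_add, neg_add_eq_sub]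
  calc v b = (v b * E b - v a) * Real.exp (F b) + v a * Real.exp (F b) := by
        linear_combination v b * hEb.symm
    _ ≤ (∫ s in a..b, E s * π s) * Real.exp (F b) + v a * Real.exp (F b) := by
        gcongr
    _ = _ := by
        rw [add_comm, ← intervalIntegral.integral_mul_const, intervalIntegral.integral_congr hφ]

theorem ContDiff.le_mul_exp_integral_add_of_fderiv_le {E : Type*} [NormedAddCommGroup E]
    [NormedSpace ℝ E] {V : ℝ × E → ℝ} (hV : ContDiff ℝ 1 V) {x x' : ℝ → E} {μ π : ℝ → ℝ}
    {a b : ℝ} (hab : a ≤ b) (hx : ∀ s ∈ Icc a b, HasDerivAt x (x' s) s)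
    (hx' : ContinuousOn x' (Icc a b)) (hμ : IntervalIntegrable μ volume a b)
    (hπ : IntervalIntegrable π volume a b)
    (hineq : ∀ s ∈ Icc a b, fderiv ℝ V (s, x s) (1, x' s) ≤ μ s * V (s, x s) + π s) :
    V (b, x b) ≤ V (a, x a) * Real.exp (∫ u in a..b, μ u)
      + ∫ s in a..b, Real.exp (∫ u in s..b, μ u) * π s := by
  rw [← uIcc_of_le hab] at hx hx' hineq
  have hv : ∀ s ∈ uIcc a b,
      HasDerivAt (fun s => V (s, x s)) (fderiv ℝ V (s, x s) (1, x' s)) s :=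
    fun s hs => (hV.differentiable one_ne_zero _).hasFDerivAt.comp_hasDerivAt s
      ((hasDerivAt_id s).prodMk (hx s hs))
  have hxc : ContinuousOn x (uIcc a b) := fun s hs => (hx s hs).continuousAt.continuousWithinAt
  have hv' : ContinuousOn (fun s => fderiv ℝ V (s, x s) (1, x' s)) (uIcc a b) :=
    ((hV.continuous_fderiv one_ne_zero).comp_continuousOn (continuousOn_id.prodMk hxc)).clm_apply
      (continuousOn_const.prodMk hx')
  refine (absolutelyContinuousOnInterval_of_hasDerivAt hv hv').le_mul_exp_integral_add_of_deriv_le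
    hab hμ hπ (Eventually.of_forall fun s hs => ?_)
  rw [← uIcc_of_le hab] at hs
  exact (hv s hs).deriv ▸ hineq s hs

theorem StrictMonoOn.tendsto_nhds_zero_of_apply_le {α : ℝ → ℝ} (hα : StrictMonoOn α (Ici 0))
    (hα0 : α 0 = 0) {ι : Type*} {l : Filter ι} {r g : ι → ℝ} (hr : ∀ i, 0 ≤ r i)
    (hg : Tendsto g l (𝓝 0)) (hle : ∀ᶠ i in l, α (r i) ≤ g i) : Tendsto r l (𝓝 0) := by
  refine tendsto_order.2 ⟨fun c hc => Eventually.of_forall fun i => hc.trans_le (hr i),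
    fun ε hε => ?_⟩
  have hαε : 0 < α ε := hα0 ▸ hα self_mem_Ici hε.le hε
  filter_upwards [hle, hg.eventually_lt_const hαε] with i hi hgi
  exact (hα.lt_iff_lt (hr i) hε.le).1 (hi.trans_lt hgi)

theorem ContinuousOn.exists_norm_le_of_tendsto {E : Type*} [SeminormedAddCommGroup E]
    {x : ℝ → E} {t₀ : ℝ} {a : E} (hc : ContinuousOn x (Ici t₀)) (hx : Tendsto x atTop (𝓝 a)) :
    ∃ M, ∀ t ≥ t₀, ‖x t‖ ≤ M := by
  obtain ⟨T, hT⟩ := eventually_atTop.1 (hx.norm.eventually (ge_mem_nhds (lt_add_one ‖a‖)))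
  obtain ⟨C, hC⟩ :=
    isCompact_Icc.exists_bound_of_continuousOn (hc.mono (Icc_subset_Ici_self : Icc t₀ T ⊆ _))
  refine ⟨max C (‖a‖ + 1), fun t ht => ?_⟩
  rcases le_total t T with htT | hTt
  · exact (hC t ⟨ht, htT⟩).trans (le_max_left _ _)
  · exact (hT t hTt).trans (le_max_right _ _)

theorem stmt9_general (tsharp : ℝ) (n : ℕ)
    (f : ℝ → EuclideanSpace ℝ (Fin n) → EuclideanSpace ℝ (Fin n))
    (hf_cont : Continuous fun p : ℝ × EuclideanSpace ℝ (Fin n) => f p.1 p.2)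
    (V : ℝ → EuclideanSpace ℝ (Fin n) → ℝ)
    (hV_C1 : ContDiff ℝ 1 fun p : ℝ × EuclideanSpace ℝ (Fin n) => V p.1 p.2)
    (α₁ α₂ : ℝ → ℝ → ℝ)
    (hα₁K : ∀ t ∈ Set.Ici tsharp, ContinuousOn (α₁ t) (Set.Ici 0) ∧
        StrictMonoOn (α₁ t) (Set.Ici 0) ∧ α₁ t 0 = 0 ∧
        Filter.Tendsto (α₁ t) Filter.atTop Filter.atTop)
    (hα₁N : ∀ s ≥ (0:ℝ), MonotoneOn (fun t => α₁ t s) (Set.Ici tsharp))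
    (μ : ℝ → ℝ)
    (hμ_int : ∀ a b : ℝ, IntervalIntegrable μ MeasureTheory.volume a b)
    (hμ_as : ∀ t₀ ∈ Set.Ici tsharp,
        Filter.Tendsto (fun t => ∫ s in t₀..t, μ s) Filter.atTop Filter.atBot)
    (π' : ℝ → ℝ)
    (hπ_int : ∀ a b : ℝ, IntervalIntegrable π' MeasureTheory.volume a b)
    (hsandwich : ∀ t ∈ Set.Ici tsharp, ∀ x : EuclideanSpace ℝ (Fin n),
        α₁ t ‖x‖ ≤ V t x ∧ V t x ≤ α₂ t ‖x‖)
    (hderiv : ∀ t ∈ Set.Ici tsharp, ∀ x : EuclideanSpace ℝ (Fin n),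
        (fderiv ℝ (fun p : ℝ × EuclideanSpace ℝ (Fin n) => V p.1 p.2) (t, x)) (1, f t x)
          ≤ μ t * V t x + π' t)
    (hκ_lim : ∀ t₀ ∈ Set.Ici tsharp,
        Filter.Tendsto (fun t => ∫ s in t₀..t, Real.exp (∫ ω in s..t, μ ω) * π' s)
          Filter.atTop (nhds 0)) :
    ∀ t₀ ∈ Set.Ici tsharp, ∀ x : ℝ → EuclideanSpace ℝ (Fin n),
      (∀ t ≥ t₀, HasDerivAt x (f t (x t)) t) →
      (∀ t ≥ t₀, α₁ t₀ ‖x t‖ ≤ V t₀ (x t₀) * Real.exp (∫ s in t₀..t, μ s) +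
          ∫ s in t₀..t, Real.exp (∫ ω in s..t, μ ω) * π' s) ∧
      (∃ M : ℝ, ∀ t ≥ t₀, ‖x t‖ ≤ M) ∧
      Filter.Tendsto x Filter.atTop (nhds 0) := by
  intro t₀ ht₀ x hx
  have hxc : ContinuousOn x (Ici t₀) := fun s hs => (hx s hs).continuousAt.continuousWithinAt
  have hbound : ∀ t ≥ t₀, α₁ t₀ ‖x t‖ ≤ V t₀ (x t₀) * Real.exp (∫ s in t₀..t, μ s) +
      ∫ s in t₀..t, Real.exp (∫ ω in s..t, μ ω) * π' s := by
    intro t ht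
    have hJ : ∀ s ∈ Icc t₀ t, s ∈ Ici tsharp := fun s hs => le_trans ht₀ hs.1
    calc α₁ t₀ ‖x t‖ ≤ α₁ t ‖x t‖ := hα₁N _ (norm_nonneg _) ht₀ (hJ t ⟨ht, le_rfl⟩) ht
      _ ≤ V t (x t) := (hsandwich t (hJ t ⟨ht, le_rfl⟩) (x t)).1
      _ ≤ _ := hV_C1.le_mul_exp_integral_add_of_fderiv_le (V := fun p => V p.1 p.2) ht
          (fun s hs => hx s hs.1)
          ((hf_cont.comp_continuousOn (continuousOn_id.prodMk hxc)).mono Icc_subset_Ici_self)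
          (hμ_int _ _) (hπ_int _ _) fun s hs => hderiv s (hJ s hs) (x s)
  have hrhs : Tendsto (fun t => V t₀ (x t₀) * Real.exp (∫ s in t₀..t, μ s) +
      ∫ s in t₀..t, Real.exp (∫ ω in s..t, μ ω) * π' s) atTop (𝓝 0) := by
    simpa using ((Real.tendsto_exp_atBot.comp (hμ_as t₀ ht₀)).const_mul _).add (hκ_lim t₀ ht₀)
  obtain ⟨-, hα₁_strictMono, hα₁_zero, -⟩ := hα₁K t₀ ht₀
  have hlim : Tendsto x atTop (𝓝 0) := tendsto_zero_iff_norm_tendsto_zero.2 <|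
    hα₁_strictMono.tendsto_nhds_zero_of_apply_le hα₁_zero (fun _ => norm_nonneg _) hrhs
      (eventually_ge_atTop t₀ |>.mono hbound)
  exact ⟨hbound, hxc.exists_norm_le_of_tendsto hlim, hlim⟩

/-- Theorem 2: with `NK∞` bounds `α₁(t,|x|) ≤ V(t,x) ≤ α₂(t,|x|)`,
an asymptotically stable `μ`, and a nonnegative piecewise continuous drift `π` with
`V̇ ≤ μ(t) V + π(t)`, if `κ(t,t₀) = ∫ s in t₀..t, φ(t,s) π(s) ds` is bounded in `t`
and tends to `0` as `t → ∞` for every `t₀ ∈ J` (where `φ(t,s) = exp ∫ s..t μ`), then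
every solution `x` satisfies `α₁(t₀,|x(t)|) ≤ V(t₀,x(t₀)) φ(t,t₀) + κ(t,t₀)` for
`t ≥ t₀`, is bounded on `[t₀,∞)`, and converges to `0`. -/
theorem stmt9 (tsharp : ℝ) (n : ℕ)
    (f : ℝ → EuclideanSpace ℝ (Fin n) → EuclideanSpace ℝ (Fin n))
    (hf_cont : Continuous fun p : ℝ × EuclideanSpace ℝ (Fin n) => f p.1 p.2)
    (hf_lip : ∀ t, LocallyLipschitz (f t))
    (hf0 : ∀ t ∈ Set.Ici tsharp, f t (0 : EuclideanSpace ℝ (Fin n)) = 0)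
    (V : ℝ → EuclideanSpace ℝ (Fin n) → ℝ)
    (hV_C1 : ContDiff ℝ 1 fun p : ℝ × EuclideanSpace ℝ (Fin n) => V p.1 p.2)
    (hV_nonneg : ∀ t ∈ Set.Ici tsharp, ∀ x : EuclideanSpace ℝ (Fin n), 0 ≤ V t x)
    (α₁ α₂ : ℝ → ℝ → ℝ)
    (hα₁K : ∀ t ∈ Set.Ici tsharp, ContinuousOn (α₁ t) (Set.Ici 0) ∧
        StrictMonoOn (α₁ t) (Set.Ici 0) ∧ α₁ t 0 = 0 ∧
        Filter.Tendsto (α₁ t) Filter.atTop Filter.atTop)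
    (hα₂K : ∀ t ∈ Set.Ici tsharp, ContinuousOn (α₂ t) (Set.Ici 0) ∧
        StrictMonoOn (α₂ t) (Set.Ici 0) ∧ α₂ t 0 = 0 ∧
        Filter.Tendsto (α₂ t) Filter.atTop Filter.atTop)
    (hα₁N : ∀ s ≥ (0:ℝ), MonotoneOn (fun t => α₁ t s) (Set.Ici tsharp))
    (hα₂N : ∀ s ≥ (0:ℝ), MonotoneOn (fun t => α₂ t s) (Set.Ici tsharp))
    (μ : ℝ → ℝ)
    (hμ_int : ∀ a b : ℝ, IntervalIntegrable μ MeasureTheory.volume a b)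
    (hμ_as : ∀ t₀ ∈ Set.Ici tsharp,
        Filter.Tendsto (fun t => ∫ s in t₀..t, μ s) Filter.atTop Filter.atBot)
    (π' : ℝ → ℝ)
    (hπ_nonneg : ∀ t ∈ Set.Ici tsharp, 0 ≤ π' t)
    (hπ_int : ∀ a b : ℝ, IntervalIntegrable π' MeasureTheory.volume a b)
    (hsandwich : ∀ t ∈ Set.Ici tsharp, ∀ x : EuclideanSpace ℝ (Fin n),
        α₁ t ‖x‖ ≤ V t x ∧ V t x ≤ α₂ t ‖x‖)
    (hderiv : ∀ t ∈ Set.Ici tsharp, ∀ x : EuclideanSpace ℝ (Fin n),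
        (fderiv ℝ (fun p : ℝ × EuclideanSpace ℝ (Fin n) => V p.1 p.2) (t, x)) (1, f t x)
          ≤ μ t * V t x + π' t)
    -- `κ(·,t₀)` is bounded and tends to `0` for every `t₀ ∈ J`
    (hκ_bdd : ∀ t₀ ∈ Set.Ici tsharp, ∃ M : ℝ, ∀ t ≥ t₀,
        |∫ s in t₀..t, Real.exp (∫ ω in s..t, μ ω) * π' s| ≤ M)
    (hκ_lim : ∀ t₀ ∈ Set.Ici tsharp,
        Filter.Tendsto (fun t => ∫ s in t₀..t, Real.exp (∫ ω in s..t, μ ω) * π' s)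
          Filter.atTop (nhds 0)) :
    ∀ t₀ ∈ Set.Ici tsharp, ∀ x : ℝ → EuclideanSpace ℝ (Fin n),
      (∀ t ≥ t₀, HasDerivAt x (f t (x t)) t) →
      (∀ t ≥ t₀, α₁ t₀ ‖x t‖ ≤ V t₀ (x t₀) * Real.exp (∫ s in t₀..t, μ s) +
          ∫ s in t₀..t, Real.exp (∫ ω in s..t, μ ω) * π' s) ∧
      (∃ M : ℝ, ∀ t ≥ t₀, ‖x t‖ ≤ M) ∧
      Filter.Tendsto x Filter.atTop (nhds 0) :=
  stmt9_general tsharp n f hf_cont V hV_C1 α₁ α₂ hα₁K hα₁N μ hμ_int hμ_as π' hπ_int hsandwich hderiv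
    hκ_lim
end

section
/- (Lemma 3, Item 3) Let φ₁ : [0,∞) → ℝ be bounded with lim_{t→∞} φ₁(t) = 0 and let φ₂ : J → ℝ be in L^1(J), and set φ(t,τ) = ∫_{τ}^{t} φ₁(t−s)φ₂(s) ds for t ≥ τ ∈ J. Then φ(t,τ) is uniformly bounded for t ≥ τ ∈ J and, for each τ ∈ J, lim_{t→∞} φ(t,τ) = 0. -/
open Filter MeasureTheory Set Topology

/- The integral over `[τ, t]` is the integral over `(τ, ∞)` of `s ↦ 𝟙_{s ≤ t} φ₁ (t - s) φ₂ s`.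
This integrand is dominated by `C |φ₂|` with `C` a bound for `φ₁` on `[0, ∞)`, and for each
fixed `s` it tends to `0` as `t → ∞` since `φ₁ → 0`; dominated convergence gives the limit and the
domination gives the uniform bound `C ‖φ₂‖_{L¹(J)}`. -/

lemma intervalIntegral_eq_setIntegral_Ioi_indicator {E : Type*} [NormedAddCommGroup E]
    [NormedSpace ℝ E] (f : ℝ → E) {τ t : ℝ} (h : τ ≤ t) :
    ∫ s in τ..t, f s = ∫ s in Ioi τ, (Iic t).indicator f s := by
  rw [intervalIntegral.integral_of_le h, integral_indicator measurableSet_Iic,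
    Measure.restrict_restrict measurableSet_Iic, Iic_inter_Ioi]

section

variable {φ₁ φ₂ : ℝ → ℝ} {C τ : ℝ}

lemma abs_indicator_mul_le (hφ₁_le : ∀ u ∈ Ici (0 : ℝ), |φ₁ u| ≤ C) (t s : ℝ) :
    |(Iic t).indicator (fun s => φ₁ (t - s) * φ₂ s) s| ≤ C * |φ₂ s| := by
  by_cases hs : s ≤ t
  · rw [indicator_of_mem (show s ∈ Iic t from hs), abs_mul]
    exact mul_le_mul_of_nonneg_right (hφ₁_le _ (sub_nonneg.2 hs)) (abs_nonneg _)
  · rw [indicator_of_notMem (show s ∉ Iic t from hs), abs_zero]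
    exact mul_nonneg ((abs_nonneg _).trans (hφ₁_le 0 self_mem_Ici)) (abs_nonneg _)

lemma tendsto_indicator_mul_atTop (hφ₁_lim : Tendsto φ₁ atTop (𝓝 0)) (s : ℝ) :
    Tendsto (fun t => (Iic t).indicator (fun s => φ₁ (t - s) * φ₂ s) s) atTop (𝓝 0) := by
  have hφ₁ : Tendsto (fun t => φ₁ (t - s) * φ₂ s) atTop (𝓝 0) := by
    simpa [← sub_eq_add_neg] using
      (hφ₁_lim.comp (tendsto_atTop_add_const_right _ (-s) tendsto_id)).mul_const (φ₂ s)
  refine hφ₁.congr' ?_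
  filter_upwards [eventually_ge_atTop s] with t hst
  rw [indicator_of_mem (show s ∈ Iic t from hst)]

lemma abs_intervalIntegral_mul_le (hφ₁_le : ∀ u ∈ Ici (0 : ℝ), |φ₁ u| ≤ C)
    (hφ₂ : IntegrableOn φ₂ (Ioi τ)) {t : ℝ} (ht : τ ≤ t) :
    |∫ s in τ..t, φ₁ (t - s) * φ₂ s| ≤ ∫ s in Ioi τ, C * |φ₂ s| := by
  rw [intervalIntegral_eq_setIntegral_Ioi_indicator _ ht]
  exact norm_integral_le_of_norm_le (f := (Iic t).indicator fun s => φ₁ (t - s) * φ₂ s)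
    (hφ₂.abs.const_mul C) (ae_of_all _ (abs_indicator_mul_le hφ₁_le t))

lemma tendsto_intervalIntegral_mul_atTop (hφ₁_meas : Measurable φ₁)
    (hφ₁_le : ∀ u ∈ Ici (0 : ℝ), |φ₁ u| ≤ C) (hφ₁_lim : Tendsto φ₁ atTop (𝓝 0))
    (hφ₂ : IntegrableOn φ₂ (Ioi τ)) :
    Tendsto (fun t => ∫ s in τ..t, φ₁ (t - s) * φ₂ s) atTop (𝓝 0) := by
  have hmeas (t : ℝ) :
      AEStronglyMeasurable (fun s => φ₁ (t - s) * φ₂ s) (volume.restrict (Ioi τ)) :=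
    (hφ₁_meas.comp (measurable_const_sub t)).aestronglyMeasurable.mul hφ₂.aestronglyMeasurable
  have hlim := tendsto_integral_filter_of_dominated_convergence (fun s => C * |φ₂ s|)
    (Eventually.of_forall fun t => (hmeas t).indicator measurableSet_Iic)
    (Eventually.of_forall fun t => ae_of_all _ (abs_indicator_mul_le hφ₁_le t))
    (hφ₂.abs.const_mul C) (ae_of_all _ (tendsto_indicator_mul_atTop hφ₁_lim))
  rw [integral_zero] at hlim
  refine hlim.congr' ?_
  filter_upwards [eventually_ge_atTop τ] with t ht
  rw [intervalIntegral_eq_setIntegral_Ioi_indicator _ ht]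

end

theorem stmt12_general (tsharp : ℝ) (φ₁ φ₂ : ℝ → ℝ)
    (h1m : Measurable φ₁)
    (h1_bdd : ∃ C : ℝ, ∀ t ∈ Set.Ici (0:ℝ), |φ₁ t| ≤ C)
    (h1_lim : Filter.Tendsto φ₁ Filter.atTop (nhds 0))
    (h2 : IntegrableOn φ₂ (Set.Ici tsharp)) :
    (∃ M : ℝ, ∀ τ ∈ Set.Ici tsharp, ∀ t ≥ τ,
        |∫ s in τ..t, φ₁ (t - s) * φ₂ s| ≤ M) ∧
    (∀ τ ∈ Set.Ici tsharp,
        Filter.Tendsto (fun t => ∫ s in τ..t, φ₁ (t - s) * φ₂ s)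
          Filter.atTop (nhds 0)) := by
  obtain ⟨C, hC⟩ := h1_bdd
  have hC₀ : 0 ≤ C := (abs_nonneg _).trans (hC 0 self_mem_Ici)
  have hφ₂ {τ : ℝ} (hτ : τ ∈ Ici tsharp) : IntegrableOn φ₂ (Ioi τ) :=
    h2.mono_set (Ioi_subset_Ici hτ)
  refine ⟨⟨∫ s in Ici tsharp, C * |φ₂ s|, fun τ hτ t ht => ?_⟩,
    fun τ hτ => tendsto_intervalIntegral_mul_atTop h1m hC h1_lim (hφ₂ hτ)⟩
  calc |∫ s in τ..t, φ₁ (t - s) * φ₂ s| ≤ ∫ s in Ioi τ, C * |φ₂ s| :=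
        abs_intervalIntegral_mul_le hC (hφ₂ hτ) ht
    _ ≤ ∫ s in Ici tsharp, C * |φ₂ s| :=
        setIntegral_mono_set (h2.abs.const_mul C)
          (ae_of_all _ fun s => mul_nonneg hC₀ (abs_nonneg _)) (Ioi_subset_Ici hτ).eventuallyLE

/-- Lemma 3, Item 3: if `φ₁ : [0,∞) → ℝ` is bounded with
`φ₁(t) → 0` as `t → ∞` and `φ₂ ∈ L¹(J)`, then `φ(t,τ) = ∫ s in τ..t, φ₁ (t-s) * φ₂ s`
is uniformly bounded for `t ≥ τ ∈ J` and, for each `τ ∈ J`, `φ(t,τ) → 0` as `t → ∞`. -/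
theorem stmt12 (tsharp : ℝ) (φ₁ φ₂ : ℝ → ℝ)
    (h1m : Measurable φ₁) (h2m : Measurable φ₂)
    (h1_bdd : ∃ C : ℝ, ∀ t ∈ Set.Ici (0:ℝ), |φ₁ t| ≤ C)
    (h1_lim : Filter.Tendsto φ₁ Filter.atTop (nhds 0))
    (h2 : IntegrableOn φ₂ (Set.Ici tsharp)) :
    (∃ M : ℝ, ∀ τ ∈ Set.Ici tsharp, ∀ t ≥ τ,
        |∫ s in τ..t, φ₁ (t - s) * φ₂ s| ≤ M) ∧
    (∀ τ ∈ Set.Ici tsharp,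
        Filter.Tendsto (fun t => ∫ s in τ..t, φ₁ (t - s) * φ₂ s)
          Filter.atTop (nhds 0)) :=
  stmt12_general tsharp φ₁ φ₂ h1m h1_bdd h1_lim h2
end

section
/- (Theorem 3, ISS with indefinite derivative) Suppose there exist a continuously differentiable V : J × ℝⁿ → [0,∞), two class-K∞ functions α₁, α₂, a class-K function ρ, and a piecewise continuous μ : J → ℝ that is uniformly exponentially stable with constants α > 0 and β ≥ 0 (i.e., ∫_{t₀}^{t} μ(s) ds ≤ −α(t−t₀) + β for all t ≥ t₀ ∈ J), such that α₁(|x|) ≤ V(t,x) ≤ α₂(|x|) for all (t,x), and along every solution, whenever V(t,x(t)) ≥ ρ(|u(t)|) one has d/dt V(t,x(t)) ≤ μ(t)V(t,x(t)). Then every solution satisfies |x(t)| ≤ α₁⁻¹( 2e^{β} α₂(|x(t₀)|) e^{−α(t−t₀)} ) + α₁⁻¹( 2e^{β} ρ( sup_{s∈[t₀,t]} |u(s)| ) ) for all t ≥ t₀ ∈ J; in particular the system ẋ = f(t,x,u) is input-to-state stable. -/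
/-!
Along a solution put `W t = V(t, x(t))` and take a threshold `c > ρ(sup_{[t₀,t]} |u|)`.
Wherever `W ≥ c`,
`log W` has derivative at most `μ`, so `W` grows at most by the factor `exp ∫ μ`. Either this
holds on all of `[t₀, t]`, and uniform exponential stability of `μ` gives
`W t ≤ e^{β - α(t - t₀)} W t₀`, or there is a last time `a ≤ t` with `W a = c`, and then
`W t ≤ c exp ∫_a^t μ ≤ e^β c`. Letting `c` decrease to `ρ(sup |u|)`, which may vanish, gives
`W t ≤ max (e^{β - α(t - t₀)} α₂(|x t₀|)) (e^β ρ(sup |u|))`, and applying `α₁⁻¹` bounds the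
maximum by the sum.
-/

open Filter MeasureTheory Set Topology

theorem le_mul_exp_integral_of_deriv_le_mul_s13 {W W' μ : ℝ → ℝ} {a b : ℝ} (hab : a ≤ b)
    (hW : ∀ s ∈ Icc a b, HasDerivAt W (W' s) s) (hμ : IntegrableOn μ (Icc a b))
    (hpos : ∀ s ∈ Icc a b, 0 < W s) (hle : ∀ s ∈ Icc a b, W' s ≤ μ s * W s) :
    W b ≤ W a * Real.exp (∫ s in a..b, μ s) := by
  have hlog : Real.log (W b) - Real.log (W a) ≤ ∫ s in a..b, μ s := by
    refine intervalIntegral.sub_le_integral_of_hasDeriv_right_of_le hab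
      (fun s hs => ((hW s hs).continuousAt.log (hpos s hs).ne').continuousWithinAt)
      (fun s hs => ((hW s (Ioo_subset_Icc_self hs)).log
        (hpos s (Ioo_subset_Icc_self hs)).ne').hasDerivWithinAt) hμ fun s hs => ?_
    have hs := Ioo_subset_Icc_self hs
    exact (div_le_iff₀ (hpos s hs)).2 (hle s hs)
  calc W b = Real.exp (Real.log (W b)) := (Real.exp_log (hpos b ⟨hab, le_rfl⟩)).symm
    _ ≤ Real.exp (Real.log (W a) + ∫ s in a..b, μ s) := Real.exp_le_exp.2 (by linarith)
    _ = W a * Real.exp (∫ s in a..b, μ s) := by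
      rw [Real.exp_add, Real.exp_log (hpos a ⟨le_rfl, hab⟩)]

theorem ContinuousOn.exists_eq_forall_Icc_le {W : ℝ → ℝ} {s₀ t c : ℝ} (hs₀ : s₀ ≤ t)
    (hW : ContinuousOn W (Icc s₀ t)) (h₀ : W s₀ ≤ c) (ht : c ≤ W t) :
    ∃ a ∈ Icc s₀ t, W a = c ∧ ∀ s ∈ Icc a t, c ≤ W s := by
  set K := Icc s₀ t ∩ W ⁻¹' Iic c
  have hK : IsCompact K :=
    isCompact_Icc.of_isClosed_subset (hW.preimage_isClosed_of_isClosed isClosed_Icc isClosed_Iic)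
      inter_subset_left
  have haK : sSup K ∈ K := hK.sSup_mem ⟨s₀, ⟨le_rfl, hs₀⟩, h₀⟩
  set a := sSup K
  have hafter : ∀ s ∈ Ioc a t, c < W s := fun s hs => not_le.1 fun hsc =>
    hs.1.not_ge (le_csSup hK.bddAbove ⟨⟨haK.1.1.trans hs.1.le, hs.2⟩, hsc⟩)
  have hca : c ≤ W a := by
    rcases haK.1.2.eq_or_lt with hat | hat
    · exact hat ▸ ht
    · have hIoo : Ioo a t ∈ 𝓝[>] a := Ioo_mem_nhdsGT hat
      have hcont : ContinuousWithinAt W (Ioi a) a := (hW a haK.1).mono_of_mem_nhdsWithin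
        (mem_of_superset hIoo (Ioo_subset_Icc_self.trans (Icc_subset_Icc_left haK.1.1)))
      refine ge_of_tendsto hcont.tendsto ?_
      filter_upwards [hIoo] with s hs using (hafter s ⟨hs.1, hs.2.le⟩).le
  refine ⟨a, haK.1, le_antisymm haK.2 hca, fun s hs => ?_⟩
  rcases hs.1.eq_or_lt with has | has
  · exact has ▸ hca
  · exact (hafter s ⟨has, hs.2⟩).le

theorem le_mul_exp_integral_or_exists_le_mul_exp_integral {W W' μ : ℝ → ℝ} {t₀ t c : ℝ}
    (ht : t₀ ≤ t) (hc : 0 < c) (hW : ∀ s ∈ Icc t₀ t, HasDerivAt W (W' s) s)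
    (hμ : IntegrableOn μ (Icc t₀ t)) (hle : ∀ s ∈ Icc t₀ t, c ≤ W s → W' s ≤ μ s * W s) :
    W t ≤ W t₀ * Real.exp (∫ s in t₀..t, μ s) ∨
      ∃ a ∈ Icc t₀ t, W t ≤ c * Real.exp (∫ s in a..t, μ s) := by
  by_cases hWt : W t < c
  · exact .inr ⟨t, ⟨ht, le_rfl⟩, by simpa using hWt.le⟩
  by_cases hall : ∀ s ∈ Icc t₀ t, c ≤ W s
  · exact .inl <| le_mul_exp_integral_of_deriv_le_mul_s13 ht hW hμ
      (fun s hs => hc.trans_le (hall s hs)) fun s hs => hle s hs (hall s hs)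
  push Not at hall hWt
  obtain ⟨s₀, hs₀, hWs₀⟩ := hall
  obtain ⟨a, ha, hWa, hafter⟩ := ContinuousOn.exists_eq_forall_Icc_le hs₀.2
    (fun s hs => (hW s ⟨hs₀.1.trans hs.1, hs.2⟩).continuousAt.continuousWithinAt) hWs₀.le hWt
  have hsub : Icc a t ⊆ Icc t₀ t := Icc_subset_Icc_left (hs₀.1.trans ha.1)
  refine .inr ⟨a, hsub ⟨le_rfl, ha.2⟩, hWa ▸ ?_⟩
  exact le_mul_exp_integral_of_deriv_le_mul_s13 ha.2 (fun s hs => hW s (hsub hs)) (hμ.mono_set hsub)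
    (fun s hs => hc.trans_le (hafter s hs)) fun s hs => hle s (hsub hs) (hafter s hs)

theorem le_max_exp_of_deriv_le_mul_of_pos {W W' μ : ℝ → ℝ} {t₀ t c α β : ℝ} (ht : t₀ ≤ t)
    (hc : 0 < c) (hα : 0 ≤ α) (hW₀ : 0 ≤ W t₀) (hW : ∀ s ∈ Icc t₀ t, HasDerivAt W (W' s) s)
    (hμ : IntegrableOn μ (Icc t₀ t))
    (hμ_ues : ∀ a ∈ Icc t₀ t, (∫ s in a..t, μ s) ≤ -α * (t - a) + β)
    (hle : ∀ s ∈ Icc t₀ t, c ≤ W s → W' s ≤ μ s * W s) :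
    W t ≤ max (Real.exp (β - α * (t - t₀)) * W t₀) (Real.exp β * c) := by
  rcases le_mul_exp_integral_or_exists_le_mul_exp_integral ht hc hW hμ hle with h | ⟨a, ha, h⟩
  · refine le_max_of_le_left (h.trans_eq (mul_comm _ _) |>.trans ?_)
    have := hμ_ues t₀ ⟨le_rfl, ht⟩
    gcongr
    linarith
  · refine le_max_of_le_right (h.trans_eq (mul_comm _ _) |>.trans ?_)
    have := hμ_ues a ha
    have : 0 ≤ α * (t - a) := mul_nonneg hα (sub_nonneg.2 ha.2)
    gcongr
    linarith

theorem le_max_exp_of_deriv_le_mul {W W' μ : ℝ → ℝ} {t₀ t c α β : ℝ} (ht : t₀ ≤ t)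
    (hc : 0 ≤ c) (hα : 0 ≤ α) (hW₀ : 0 ≤ W t₀) (hW : ∀ s ∈ Icc t₀ t, HasDerivAt W (W' s) s)
    (hμ : IntegrableOn μ (Icc t₀ t))
    (hμ_ues : ∀ a ∈ Icc t₀ t, (∫ s in a..t, μ s) ≤ -α * (t - a) + β)
    (hle : ∀ s ∈ Icc t₀ t, c ≤ W s → W' s ≤ μ s * W s) :
    W t ≤ max (Real.exp (β - α * (t - t₀)) * W t₀) (Real.exp β * c) := by
  have hcont : Continuous fun c' => max (Real.exp (β - α * (t - t₀)) * W t₀) (Real.exp β * c') :=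
    by fun_prop
  refine ge_of_tendsto ((hcont.tendsto c).mono_left (nhdsWithin_le_nhds (s := Ioi c)))
    (eventually_nhdsWithin_of_forall fun c' hc' => ?_)
  exact le_max_exp_of_deriv_le_mul_of_pos ht (hc.trans_lt hc') hα hW₀ hW hμ hμ_ues
    fun s hs hWs => hle s hs ((mem_Ioi.1 hc').le.trans hWs)

theorem surjOn_Ici_zero_of_tendsto_atTop {φ : ℝ → ℝ} (hφ : ContinuousOn φ (Ici 0))
    (hφ0 : φ 0 = 0) (htop : Tendsto φ atTop atTop) : SurjOn φ (Ici 0) (Ici 0) := by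
  intro y (hy : 0 ≤ y)
  obtain ⟨b, hyb, hb⟩ := ((htop.eventually_ge_atTop y).and (eventually_ge_atTop 0)).exists
  obtain ⟨s, hs, rfl⟩ := intermediate_value_Icc hb (hφ.mono Icc_subset_Ici_self)
    ⟨by rwa [hφ0], hyb⟩
  exact ⟨s, hs.1, rfl⟩

theorem le_add_of_apply_le_max {φ ψ : ℝ → ℝ} (hφ : StrictMonoOn φ (Ici 0))
    (hsurj : SurjOn φ (Ici 0) (Ici 0)) (hψ : InvOn ψ φ (Ici 0) (Ici 0)) {s P Q : ℝ}
    (hs : 0 ≤ s) (hP : 0 ≤ P) (hQ : 0 ≤ Q) (h : φ s ≤ max P Q) : s ≤ ψ P + ψ Q := by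
  have hmaps : MapsTo ψ (Ici 0) (Ici 0) := hψ.1.mapsTo hsurj
  have hψP : 0 ≤ ψ P := hmaps hP
  have hψQ : 0 ≤ ψ Q := hmaps hQ
  have hsψ : ∀ y, 0 ≤ y → φ s ≤ y → s ≤ ψ y := fun y hy hsy =>
    (hφ.le_iff_le hs (hmaps hy)).1 (hsy.trans_eq (hψ.2 hy).symm)
  rcases max_choice P Q with hmax | hmax
  · linarith [hsψ P hP (hmax ▸ h)]
  · linarith [hsψ Q hQ (hmax ▸ h)]

theorem stmt13_general (tsharp : ℝ) (n m : ℕ)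
    (f : ℝ → EuclideanSpace ℝ (Fin n) → EuclideanSpace ℝ (Fin m) → EuclideanSpace ℝ (Fin n))
    (V : ℝ → EuclideanSpace ℝ (Fin n) → ℝ)
    (hV_C1 : ContDiff ℝ 1 fun p : ℝ × EuclideanSpace ℝ (Fin n) => V p.1 p.2)
    (hV_nonneg : ∀ t ∈ Set.Ici tsharp, ∀ x : EuclideanSpace ℝ (Fin n), 0 ≤ V t x)
    (α₁ α₂ : ℝ → ℝ)
    (hα₁K : ContinuousOn α₁ (Set.Ici 0) ∧ StrictMonoOn α₁ (Set.Ici 0) ∧ α₁ 0 = 0 ∧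
        Filter.Tendsto α₁ Filter.atTop Filter.atTop)
    (α₁inv : ℝ → ℝ)
    (hα₁inv : Set.InvOn α₁inv α₁ (Set.Ici 0) (Set.Ici 0))
    (ρ : ℝ → ℝ)
    (hρK : ContinuousOn ρ (Set.Ici 0) ∧ MonotoneOn ρ (Set.Ici 0) ∧ ρ 0 = 0)
    (μ : ℝ → ℝ)
    (hμ_int : ∀ a b : ℝ, IntervalIntegrable μ MeasureTheory.volume a b)
    (α β : ℝ) (hα : 0 < α)
    (hμ_ues : ∀ t₀ ∈ Set.Ici tsharp, ∀ t ≥ t₀,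
        (∫ s in t₀..t, μ s) ≤ -α * (t - t₀) + β)
    (hsandwich : ∀ t ∈ Set.Ici tsharp, ∀ x : EuclideanSpace ℝ (Fin n),
        α₁ ‖x‖ ≤ V t x ∧ V t x ≤ α₂ ‖x‖) :
    ∀ t₀ ∈ Set.Ici tsharp, ∀ u : ℝ → EuclideanSpace ℝ (Fin m),
      ∀ x : ℝ → EuclideanSpace ℝ (Fin n),
      -- `x` is a solution of `ẋ = f(t,x,u)` on `[t₀,∞)`
      (∀ t ≥ t₀, HasDerivAt x (f t (x t) (u t)) t) →
      -- the input is locally (essentially) bounded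
      (∀ a b : ℝ, BddAbove ((fun s => ‖u s‖) '' Set.Icc a b)) →
      -- along the solution, `V(t,x(t)) ≥ ρ(|u(t)|)` implies `V̇(t,x(t)) ≤ μ(t) V(t,x(t))`
      (∀ t ≥ t₀, ρ ‖u t‖ ≤ V t (x t) →
          (fderiv ℝ (fun p : ℝ × EuclideanSpace ℝ (Fin n) => V p.1 p.2) (t, x t))
            (1, f t (x t) (u t)) ≤ μ t * V t (x t)) →
      ∀ t ≥ t₀, ‖x t‖ ≤
        α₁inv (2 * Real.exp β * α₂ ‖x t₀‖ * Real.exp (-α * (t - t₀))) +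
        α₁inv (2 * Real.exp β * ρ (sSup ((fun s => ‖u s‖) '' Set.Icc t₀ t))) := by
  intro t₀ ht₀ u x hx hu hdecay t ht
  obtain ⟨hα₁c, hα₁m, hα₁0, hα₁top⟩ := hα₁K
  set S := sSup ((fun s => ‖u s‖) '' Icc t₀ t)
  have huS : ∀ s ∈ Icc t₀ t, ‖u s‖ ≤ S := fun s hs => le_csSup (hu t₀ t) ⟨s, hs, rfl⟩
  have hS : 0 ≤ S := (norm_nonneg _).trans (huS t₀ ⟨le_rfl, ht⟩)
  have hρS : 0 ≤ ρ S := hρK.2.2 ▸ hρK.2.1 self_mem_Ici hS hS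
  have hW : ∀ s ∈ Icc t₀ t, HasDerivAt (fun s => V s (x s))
      (fderiv ℝ (fun p : ℝ × EuclideanSpace ℝ (Fin n) => V p.1 p.2) (s, x s)
        (1, f s (x s) (u s))) s := fun s hs =>
    ((hV_C1.differentiable one_ne_zero) _).hasFDerivAt.comp_hasDerivAt s
      ((hasDerivAt_id s).prodMk (hx s hs.1))
  have hV₀ : 0 ≤ V t₀ (x t₀) := hV_nonneg t₀ ht₀ (x t₀)
  have hVα₂ : V t₀ (x t₀) ≤ α₂ ‖x t₀‖ := (hsandwich t₀ ht₀ (x t₀)).2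
  have hbound := le_max_exp_of_deriv_le_mul ht hρS hα.le hV₀ hW
    ((intervalIntegrable_iff_integrableOn_Icc_of_le ht).1 (hμ_int t₀ t))
    (fun a ha => hμ_ues a (le_trans ht₀ ha.1) t ha.2)
    fun s hs h => hdecay s hs.1 ((hρK.2.1 (norm_nonneg _) hS (huS s hs)).trans h)
  refine le_add_of_apply_le_max hα₁m (surjOn_Ici_zero_of_tendsto_atTop hα₁c hα₁0 hα₁top) hα₁inv
    (norm_nonneg _) (by have := hV₀.trans hVα₂; positivity) (by positivity) ?_
  calc α₁ ‖x t‖ ≤ V t (x t) := (hsandwich t (le_trans ht₀ ht) (x t)).1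
    _ ≤ _ := hbound
    _ ≤ _ := by
      refine max_le_max ?_ (by nlinarith [Real.exp_pos β])
      calc Real.exp (β - α * (t - t₀)) * V t₀ (x t₀)
          ≤ Real.exp (β - α * (t - t₀)) * (2 * α₂ ‖x t₀‖) := by gcongr; linarith
        _ = _ := by rw [sub_eq_add_neg, ← neg_mul, Real.exp_add]; ring

/-- Theorem 3, ISS with indefinite derivative: with class-`K∞`
bounds `α₁(|x|) ≤ V(t,x) ≤ α₂(|x|)`, a class-`K` function `ρ`, and a uniformly
exponentially stable `μ` (constants `α > 0`, `β ≥ 0`), if along every solution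
`V(t,x(t)) ≥ ρ(|u(t)|)` implies `d/dt V(t,x(t)) ≤ μ(t) V(t,x(t))`, then every
solution satisfies
`|x(t)| ≤ α₁⁻¹(2 e^β α₂(|x(t₀)|) e^{-α(t-t₀)}) + α₁⁻¹(2 e^β ρ(sup_{[t₀,t]} |u|))`;
in particular the system is input-to-state stable. -/
theorem stmt13 (tsharp : ℝ) (n m : ℕ)
    (f : ℝ → EuclideanSpace ℝ (Fin n) → EuclideanSpace ℝ (Fin m) → EuclideanSpace ℝ (Fin n))
    (hf_cont : Continuous fun p : ℝ × EuclideanSpace ℝ (Fin n) × EuclideanSpace ℝ (Fin m) =>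
        f p.1 p.2.1 p.2.2)
    (hf0 : ∀ t ∈ Set.Ici tsharp, f t 0 0 = 0)
    (V : ℝ → EuclideanSpace ℝ (Fin n) → ℝ)
    (hV_C1 : ContDiff ℝ 1 fun p : ℝ × EuclideanSpace ℝ (Fin n) => V p.1 p.2)
    (hV_nonneg : ∀ t ∈ Set.Ici tsharp, ∀ x : EuclideanSpace ℝ (Fin n), 0 ≤ V t x)
    (α₁ α₂ : ℝ → ℝ)
    (hα₁K : ContinuousOn α₁ (Set.Ici 0) ∧ StrictMonoOn α₁ (Set.Ici 0) ∧ α₁ 0 = 0 ∧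
        Filter.Tendsto α₁ Filter.atTop Filter.atTop)
    (hα₂K : ContinuousOn α₂ (Set.Ici 0) ∧ StrictMonoOn α₂ (Set.Ici 0) ∧ α₂ 0 = 0 ∧
        Filter.Tendsto α₂ Filter.atTop Filter.atTop)
    (α₁inv : ℝ → ℝ)
    (hα₁inv : Set.InvOn α₁inv α₁ (Set.Ici 0) (Set.Ici 0))
    (ρ : ℝ → ℝ)
    (hρK : ContinuousOn ρ (Set.Ici 0) ∧ MonotoneOn ρ (Set.Ici 0) ∧ ρ 0 = 0)
    (μ : ℝ → ℝ)
    (hμ_int : ∀ a b : ℝ, IntervalIntegrable μ MeasureTheory.volume a b)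
    (α β : ℝ) (hα : 0 < α) (hβ : 0 ≤ β)
    (hμ_ues : ∀ t₀ ∈ Set.Ici tsharp, ∀ t ≥ t₀,
        (∫ s in t₀..t, μ s) ≤ -α * (t - t₀) + β)
    (hsandwich : ∀ t ∈ Set.Ici tsharp, ∀ x : EuclideanSpace ℝ (Fin n),
        α₁ ‖x‖ ≤ V t x ∧ V t x ≤ α₂ ‖x‖) :
    ∀ t₀ ∈ Set.Ici tsharp, ∀ u : ℝ → EuclideanSpace ℝ (Fin m),
      ∀ x : ℝ → EuclideanSpace ℝ (Fin n),
      -- `x` is a solution of `ẋ = f(t,x,u)` on `[t₀,∞)`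
      (∀ t ≥ t₀, HasDerivAt x (f t (x t) (u t)) t) →
      -- the input is locally (essentially) bounded
      (∀ a b : ℝ, BddAbove ((fun s => ‖u s‖) '' Set.Icc a b)) →
      -- along the solution, `V(t,x(t)) ≥ ρ(|u(t)|)` implies `V̇(t,x(t)) ≤ μ(t) V(t,x(t))`
      (∀ t ≥ t₀, ρ ‖u t‖ ≤ V t (x t) →
          (fderiv ℝ (fun p : ℝ × EuclideanSpace ℝ (Fin n) => V p.1 p.2) (t, x t))
            (1, f t (x t) (u t)) ≤ μ t * V t (x t)) →
      ∀ t ≥ t₀, ‖x t‖ ≤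
        α₁inv (2 * Real.exp β * α₂ ‖x t₀‖ * Real.exp (-α * (t - t₀))) +
        α₁inv (2 * Real.exp β * ρ (sSup ((fun s => ‖u s‖) '' Set.Icc t₀ t))) :=
  stmt13_general tsharp n m f V hV_C1 hV_nonneg α₁ α₂ hα₁K α₁inv hα₁inv ρ hρK μ hμ_int α β hα hμ_ues
    hsandwich
end

section
/- (Appendix A3) Let μ(t) = 2/(1+t) − t·|cos t| for t ≥ 0. Then ∫_{t₀}^{t} μ(s) ds ≤ −(4/(3π))(t−t₀) + 2·ln(1 + (3/2)π) + 2 for all t ≥ t₀ ≥ 0; in particular μ is uniformly exponentially stable. A key intermediate estimate is that ∫_{t}^{t+(3/2)π} μ(s) ds ≤ 2·ln(1 + (3/2)π) − (1 + (3/2)π) < −2 for every t ≥ 0. -/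
/-!
Over a window of length `L = 3π/2` starting at `t ≥ 0`, the term `2/(1+s)` contributes at most
`2 log (1 + L)`, while `∫ s |cos s|` is at least `1 + L`: for `t ≤ π/2` the window contains
`[π/2, 3π/2]`, where that integral equals `2π`, and for `t ≥ π/2` one bounds `|cos| ≥ cos²` and
integrates `s cos² s` explicitly. Since `2 log (1 + L) - (1 + L) < -2`, each full window lowers the
integral by more than `2`; cutting `[t₀, t]` into `⌊(t - t₀)/L⌋` windows and a remainder shorter
than `L`, on which the integral is at most `2 log (1 + L)`, gives the linear bound with rate
`2/L = 4/(3π)`.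
-/

open MeasureTheory Set Real intervalIntegral

lemma intervalIntegrable_of_continuousOn_Ici {f : ℝ → ℝ} (hf : ContinuousOn f (Ici 0))
    {a b : ℝ} (ha : 0 ≤ a) (hb : 0 ≤ b) : IntervalIntegrable f volume a b :=
  (hf.mono fun _ hx => le_trans (le_min ha hb) hx.1).intervalIntegrable

lemma integral_le_nat_mul_of_integral_window_le {f : ℝ → ℝ} {L c : ℝ} (hL : 0 ≤ L)
    (hf : ContinuousOn f (Ici 0)) (hwin : ∀ t, 0 ≤ t → ∫ s in t..t + L, f s ≤ c)
    {t₀ : ℝ} (ht₀ : 0 ≤ t₀) (n : ℕ) :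
    ∫ s in t₀..t₀ + n * L, f s ≤ n * c := by
  have hnode : ∀ k : ℕ, 0 ≤ t₀ + k * L := fun k => by positivity
  have hsum := sum_integral_adjacent_intervals (a := fun k : ℕ => t₀ + k * L) (n := n)
    fun k _ => intervalIntegrable_of_continuousOn_Ici hf (hnode k) (hnode (k + 1))
  simp only [Nat.cast_zero, zero_mul, add_zero] at hsum
  rw [← hsum]
  calc ∑ k ∈ Finset.range n, ∫ s in t₀ + k * L..t₀ + (k + 1 : ℕ) * L, f s
      ≤ ∑ _k ∈ Finset.range n, c := by
        refine Finset.sum_le_sum fun k _ => ?_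
        have hstep : t₀ + (k + 1 : ℕ) * L = t₀ + k * L + L := by push_cast; ring
        simpa only [hstep] using hwin _ (hnode k)
    _ = n * c := by simp

lemma integral_le_of_integral_window_le {f : ℝ → ℝ} {L c M : ℝ} (hL : 0 < L) (hc : c ≤ 0)
    (hf : ContinuousOn f (Ici 0)) (hwin : ∀ t, 0 ≤ t → ∫ s in t..t + L, f s ≤ c)
    (hrem : ∀ a b, 0 ≤ a → a ≤ b → b - a ≤ L → ∫ s in a..b, f s ≤ M)
    {t₀ t : ℝ} (ht₀ : 0 ≤ t₀) (ht : t₀ ≤ t) :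
    ∫ s in t₀..t, f s ≤ c / L * (t - t₀) - c + M := by
  set n := ⌊(t - t₀) / L⌋₊
  have hq : 0 ≤ (t - t₀) / L := div_nonneg (by linarith) hL.le
  have hn_le : (n : ℝ) * L ≤ t - t₀ := (le_div_iff₀ hL).1 (Nat.floor_le hq)
  have hlt_n : t - t₀ < (n + 1) * L := (div_lt_iff₀ hL).1 (Nat.lt_floor_add_one _)
  have hmid : 0 ≤ t₀ + n * L := by positivity
  rw [← integral_add_adjacent_intervals
    (intervalIntegrable_of_continuousOn_Ici hf ht₀ hmid)
    (intervalIntegrable_of_continuousOn_Ici hf hmid (ht₀.trans ht))]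
  have hfull := integral_le_nat_mul_of_integral_window_le hL.le hf hwin ht₀ n
  have hlast := hrem _ t hmid (by linarith) (by linarith)
  have hcount : n * c ≤ c / L * (t - t₀) - c := by
    rw [le_sub_iff_add_le, div_mul_eq_mul_div, le_div_iff₀ hL]
    nlinarith [mul_le_mul_of_nonpos_left hlt_n.le hc]
  linarith

lemma integral_two_div_one_add {a b : ℝ} (ha : -1 < a) (hb : -1 < b) :
    ∫ s in a..b, 2 / (1 + s) = 2 * log ((1 + b) / (1 + a)) := by
  simp only [div_eq_mul_inv (2 : ℝ), intervalIntegral.integral_const_mul,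
    integral_comp_add_left (·⁻¹),
    integral_inv_of_pos (by linarith : (0 : ℝ) < 1 + a) (by linarith : (0 : ℝ) < 1 + b)]

lemma log_one_add_div_one_add_le {a b : ℝ} (ha : 0 ≤ a) (hab : a ≤ b) :
    log ((1 + b) / (1 + a)) ≤ log (1 + (b - a)) := by
  have h1a : 0 < 1 + a := by linarith
  apply log_le_log (div_pos (by linarith) h1a)
  rw [div_le_iff₀ h1a]
  nlinarith

noncomputable def mu (s : ℝ) : ℝ := 2 / (1 + s) - s * |cos s|

lemma continuousOn_two_div_one_add : ContinuousOn (fun s : ℝ => 2 / (1 + s)) (Ici 0) :=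
  continuousOn_const.div (continuousOn_const.add continuousOn_id) fun x (hx : 0 ≤ x) => by
    change 1 + x ≠ 0
    positivity

lemma continuousOn_mu : ContinuousOn mu (Ici 0) :=
  continuousOn_two_div_one_add.sub (continuous_id.mul continuous_cos.abs).continuousOn

lemma integral_mu {a b : ℝ} (ha : 0 ≤ a) (hb : 0 ≤ b) :
    ∫ s in a..b, mu s = 2 * log ((1 + b) / (1 + a)) - ∫ s in a..b, s * |cos s| := by
  rw [← integral_two_div_one_add (by linarith) (by linarith)]
  exact integral_sub (intervalIntegrable_of_continuousOn_Ici continuousOn_two_div_one_add ha hb)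
    ((continuous_id.mul continuous_cos.abs).intervalIntegrable _ _)

lemma integral_mu_le {a b : ℝ} (ha : 0 ≤ a) (hab : a ≤ b) :
    ∫ s in a..b, mu s ≤ 2 * log (1 + (b - a)) := by
  have hpos : 0 ≤ ∫ s in a..b, s * |cos s| :=
    integral_nonneg hab fun x hx => mul_nonneg (ha.trans hx.1) (abs_nonneg _)
  rw [integral_mu ha (ha.trans hab)]
  linarith [log_one_add_div_one_add_le ha hab]

lemma integral_mul_abs_cos_pi_div_two_three_pi_div_two :
    ∫ s in π / 2..3 * π / 2, s * |cos s| = 2 * π := by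
  have hcos : EqOn (fun s => s * |cos s|) (fun s => -(s * cos s)) (uIcc (π / 2) (3 * π / 2)) := by
    intro x hx
    rw [uIcc_of_le (by linarith [pi_pos])] at hx
    simp only [abs_of_nonpos (cos_nonpos_of_pi_div_two_le_of_le hx.1 (by linarith [hx.2])),
      mul_neg]
  have hderiv (x : ℝ) : HasDerivAt (fun s => -(s * sin s + cos s)) (-(x * cos x)) x :=
    (((hasDerivAt_id x).mul (hasDerivAt_sin x)).add (hasDerivAt_cos x)).neg.congr_deriv
      (by simp only [id_eq, one_mul]; ring)
  rw [integral_congr hcos, integral_eq_sub_of_hasDerivAt (fun x _ => hderiv x)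
    ((continuous_id.mul continuous_cos).neg.intervalIntegrable _ _),
    show 3 * π / 2 = π / 2 + π by ring, sin_add_pi, cos_add_pi, sin_pi_div_two, cos_pi_div_two]
  ring

lemma hasDerivAt_mul_cos_sq_primitive (x : ℝ) :
    HasDerivAt (fun s => s ^ 2 / 4 + s * sin (2 * s) / 4 + cos (2 * s) / 8)
      (x * cos x ^ 2) x := by
  have h2x : HasDerivAt (fun s : ℝ => 2 * s) 2 x := by
    simpa using (hasDerivAt_id x).const_mul 2
  have h := (((hasDerivAt_pow 2 x).div_const 4).add
    (((hasDerivAt_id x).mul ((hasDerivAt_sin (2 * x)).comp x h2x)).div_const 4)).add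
    (((hasDerivAt_cos (2 * x)).comp x h2x).div_const 8)
  refine h.congr_deriv ?_
  simp only [id_eq, Function.comp_apply, cos_two_mul x]
  ring

lemma one_add_three_halves_pi_le_integral_mul_abs_cos_of_le {t : ℝ} (ht : 0 ≤ t)
    (htπ : t ≤ π / 2) : 1 + 3 / 2 * π ≤ ∫ s in t..t + 3 / 2 * π, s * |cos s| := by
  have hmono : ∫ s in π / 2..3 * π / 2, s * |cos s| ≤ ∫ s in t..t + 3 / 2 * π, s * |cos s| := by
    refine integral_mono_interval htπ (by linarith [pi_pos]) (by linarith) ?_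
      ((continuous_id.mul continuous_cos.abs).intervalIntegrable _ _)
    filter_upwards [ae_restrict_mem measurableSet_Ioc] with x hx
    exact mul_nonneg (ht.trans hx.1.le) (abs_nonneg _)
  rw [integral_mul_abs_cos_pi_div_two_three_pi_div_two] at hmono
  linarith [pi_gt_three]

lemma one_add_three_halves_pi_le_integral_mul_abs_cos_of_ge {t : ℝ} (htπ : π / 2 ≤ t) :
    1 + 3 / 2 * π ≤ ∫ s in t..t + 3 / 2 * π, s * |cos s| := by
  have hpi := pi_gt_three
  have hmono : ∫ s in t..t + 3 / 2 * π, s * cos s ^ 2 ≤ ∫ s in t..t + 3 / 2 * π, s * |cos s| := by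
    refine integral_mono_on (by linarith)
      ((continuous_id.mul (continuous_cos.pow 2)).intervalIntegrable _ _)
      ((continuous_id.mul continuous_cos.abs).intervalIntegrable _ _) fun x hx => ?_
    have hsq : cos x ^ 2 ≤ |cos x| := by
      rw [← sq_abs, sq]
      exact mul_le_of_le_one_left (abs_nonneg _) (abs_cos_le_one x)
    exact mul_le_mul_of_nonneg_left hsq (by linarith [hx.1])
  rw [integral_eq_sub_of_hasDerivAt (fun x _ => hasDerivAt_mul_cos_sq_primitive x)
    ((continuous_id.mul (continuous_cos.pow 2)).intervalIntegrable _ _),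
    show 2 * (t + 3 / 2 * π) = 2 * t + π + π + π by ring] at hmono
  simp only [sin_add_pi, cos_add_pi] at hmono
  have hsin := sin_le_one (2 * t)
  have hcos := cos_le_one (2 * t)
  nlinarith [mul_le_mul (by linarith : 5 / 2 * π ≤ 2 * t + 3 / 2 * π)
    (by linarith : 3 / 2 * π - 1 ≤ 3 / 2 * π - sin (2 * t)) (by linarith) (by linarith)]

lemma one_add_three_halves_pi_le_integral_mul_abs_cos {t : ℝ} (ht : 0 ≤ t) :
    1 + 3 / 2 * π ≤ ∫ s in t..t + 3 / 2 * π, s * |cos s| := by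
  rcases le_total t (π / 2) with htπ | htπ
  · exact one_add_three_halves_pi_le_integral_mul_abs_cos_of_le ht htπ
  · exact one_add_three_halves_pi_le_integral_mul_abs_cos_of_ge htπ

lemma integral_mu_window_le {t : ℝ} (ht : 0 ≤ t) :
    ∫ s in t..t + 3 / 2 * π, mu s ≤ 2 * log (1 + 3 / 2 * π) - (1 + 3 / 2 * π) := by
  rw [integral_mu ht (by positivity)]
  have hlog := log_one_add_div_one_add_le ht
    (le_add_of_nonneg_right (by positivity) : t ≤ t + 3 / 2 * π)
  rw [add_sub_cancel_left] at hlog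
  linarith [one_add_three_halves_pi_le_integral_mul_abs_cos ht]

lemma two_mul_log_lt_sub_two {x : ℝ} (hx : 28 / 5 ≤ x) : 2 * log x < x - 2 := by
  have hx0 : 0 < x := by linarith
  have he : 7 < exp 2 := by
    have := exp_one_gt_d9
    rw [show (2 : ℝ) = 1 + 1 by norm_num, exp_add]
    nlinarith
  have hlog : log x ≤ 1 + x / exp 2 := by
    have := log_le_sub_one_of_pos (div_pos hx0 (exp_pos 2))
    rw [log_div hx0.ne' (exp_pos 2).ne', log_exp] at this
    linarith
  have : x / exp 2 < x / 7 := div_lt_div_of_pos_left hx0 (by norm_num) he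
  linarith

lemma two_mul_log_one_add_three_halves_pi_sub_lt :
    2 * log (1 + 3 / 2 * π) - (1 + 3 / 2 * π) < -2 := by
  linarith [two_mul_log_lt_sub_two (x := 1 + 3 / 2 * π) (by linarith [pi_gt_d2])]

lemma integral_mu_le_linear {t₀ t : ℝ} (ht₀ : 0 ≤ t₀) (ht : t₀ ≤ t) :
    ∫ s in t₀..t, mu s ≤ -(4 / (3 * π)) * (t - t₀) + 2 * log (1 + 3 / 2 * π) + 2 := by
  have hL : 0 < 3 / 2 * π := by positivity
  have h := integral_le_of_integral_window_le (M := 2 * log (1 + 3 / 2 * π)) hL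
    (by norm_num : (-2 : ℝ) ≤ 0) continuousOn_mu
    (fun t ht => (integral_mu_window_le ht).trans two_mul_log_one_add_three_halves_pi_sub_lt.le)
    (fun a b ha hab hba => (integral_mu_le ha hab).trans <|
      mul_le_mul_of_nonneg_left (log_le_log (by linarith) (by linarith)) zero_le_two) ht₀ ht
  have hrate : -2 / (3 / 2 * π) = -(4 / (3 * π)) := by field_simp; ring
  linarith [hrate ▸ h]

/-- Appendix A3: for `μ(t) = 2/(1+t) - t |cos t|` on `[0,∞)`:
the key estimate `∫ s in t..(t + 3π/2), μ s ≤ 2 ln(1 + 3π/2) - (1 + 3π/2) < -2`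
holds for every `t ≥ 0`, and
`∫ s in t₀..t, μ s ≤ -(4/(3π)) (t - t₀) + 2 ln(1 + 3π/2) + 2` for all `t ≥ t₀ ≥ 0`;
in particular `μ` is uniformly exponentially stable. -/
theorem stmt17 :
    -- key intermediate estimate
    (∀ t : ℝ, 0 ≤ t →
      (∫ s in t..(t + 3 / 2 * Real.pi), (2 / (1 + s) - s * |Real.cos s|)) ≤
        2 * Real.log (1 + 3 / 2 * Real.pi) - (1 + 3 / 2 * Real.pi)) ∧
    (2 * Real.log (1 + 3 / 2 * Real.pi) - (1 + 3 / 2 * Real.pi) < -2) ∧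
    -- main inequality (eq. (58)/(59))
    (∀ t₀ : ℝ, 0 ≤ t₀ → ∀ t ≥ t₀,
      (∫ s in t₀..t, (2 / (1 + s) - s * |Real.cos s|)) ≤
        -(4 / (3 * Real.pi)) * (t - t₀) + 2 * Real.log (1 + 3 / 2 * Real.pi) + 2) ∧
    -- in particular, μ is uniformly exponentially stable
    (∃ α : ℝ, 0 < α ∧ ∃ β : ℝ, 0 ≤ β ∧ ∀ t₀ : ℝ, 0 ≤ t₀ → ∀ t ≥ t₀,
      (∫ s in t₀..t, (2 / (1 + s) - s * |Real.cos s|)) ≤ -α * (t - t₀) + β) := by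
  have hβ : 0 ≤ 2 * log (1 + 3 / 2 * π) + 2 := by
    have : 0 ≤ log (1 + 3 / 2 * π) := log_nonneg (by linarith [pi_pos])
    linarith
  exact ⟨fun t ht => integral_mu_window_le ht, two_mul_log_one_add_three_halves_pi_sub_lt,
    fun t₀ ht₀ t ht => integral_mu_le_linear ht₀ ht,
    4 / (3 * π), by positivity, _, hβ,
    fun t₀ ht₀ t ht => (integral_mu_le_linear ht₀ ht).trans_eq (add_assoc _ _ _)⟩
end

section
/- (Example 1) Let t₀ > 1 and let x : [t₀,∞) → ℝ be continuously differentiable with ẋ(t) = −x(t)/(t + sin x(t)) for all t ≥ t₀ (note t + sin x > 0 for t > 1, so the right-hand side is well defined). Then |x(t)| ≤ |x(t₀)|·(1+t₀)/(1+t) for all t ≥ t₀; in particular every solution converges to 0 as t → ∞. -/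
/-! The weighted quantity `(1 + t) x(t)` has derivative `x (sin x - 1) / (t + sin x)`, whose product
with `(1 + t) x` is `≤ 0` because `sin x ≤ 1` and `t + sin x > 0`. Hence `|(1 + t) x(t)|` is
nonincreasing, which is the claimed bound, and the bound decays like `1 / (1 + t)`. -/

open Filter Set

theorem Convex.antitoneOn_abs_of_mul_deriv_nonpos {D : Set ℝ} (hD : Convex ℝ D) {f f' : ℝ → ℝ}
    (hf : ContinuousOn f D) (hf' : ∀ t ∈ interior D, HasDerivAt f (f' t) t)
    (hff' : ∀ t ∈ interior D, f t * f' t ≤ 0) :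
    AntitoneOn (fun t => |f t|) D := by
  have hsq : AntitoneOn (f ^ 2) D := by
    refine antitoneOn_of_hasDerivWithinAt_nonpos hD (hf.pow 2)
      (fun t ht => ((hf' t ht).pow 2).hasDerivWithinAt) fun t ht => ?_
    have := hff' t ht
    simp only [Nat.cast_ofNat, Nat.add_one_sub_one, pow_one]
    nlinarith
  intro s hs t ht hst
  exact sq_le_sq.mp (hsq hs ht hst)

theorem hasDerivAt_one_add_mul_of_hasDerivAt_neg_div_add_sin {x : ℝ → ℝ} {t : ℝ}
    (hx : HasDerivAt x (-(x t) / (t + Real.sin (x t))) t) (ht : t + Real.sin (x t) ≠ 0) :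
    HasDerivAt (fun s => (1 + s) * x s) (x t * (Real.sin (x t) - 1) / (t + Real.sin (x t))) t := by
  refine (((hasDerivAt_id' t).const_add 1).mul hx).congr_deriv ?_
  field_simp
  ring

theorem one_add_mul_mul_div_sin_sub_one_nonpos {t y : ℝ} (ht : 1 < t) :
    (1 + t) * y * (y * (Real.sin y - 1) / (t + Real.sin y)) ≤ 0 := by
  have hden : 0 < t + Real.sin y := by linarith [Real.neg_one_le_sin y]
  have hnum : (1 + t) * y * (y * (Real.sin y - 1)) ≤ 0 := by
    have := mul_nonneg (mul_nonneg (by linarith : (0 : ℝ) ≤ 1 + t) (mul_self_nonneg y))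
      (sub_nonneg.mpr (Real.sin_le_one y))
    nlinarith
  rw [← mul_div_assoc]
  exact div_nonpos_of_nonpos_of_nonneg hnum hden.le

/-- Example 1: if `t₀ > 1` and `x : [t₀,∞) → ℝ` is a solution of
`ẋ = -x/(t + sin x)`, then `|x t| ≤ |x t₀| * (1 + t₀)/(1 + t)` for all `t ≥ t₀`;
in particular every solution converges to `0` as `t → ∞`. -/
theorem stmt18 (t₀ : ℝ) (ht₀ : 1 < t₀) (x : ℝ → ℝ)
    (hx : ∀ t ≥ t₀, HasDerivAt x (-(x t) / (t + Real.sin (x t))) t) :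
    (∀ t ≥ t₀, |x t| ≤ |x t₀| * ((1 + t₀) / (1 + t))) ∧
    Filter.Tendsto x Filter.atTop (nhds 0) := by
  have hy : ∀ t ≥ t₀, HasDerivAt (fun s => (1 + s) * x s)
      (x t * (Real.sin (x t) - 1) / (t + Real.sin (x t))) t := fun t ht =>
    hasDerivAt_one_add_mul_of_hasDerivAt_neg_div_add_sin (hx t ht)
      (by linarith [Real.neg_one_le_sin (x t)])
  have hanti : AntitoneOn (fun t => |(1 + t) * x t|) (Ici t₀) := by
    refine (convex_Ici t₀).antitoneOn_abs_of_mul_deriv_nonpos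
      (fun t ht => (hy t ht).continuousAt.continuousWithinAt) (fun t ht => hy t ?_) fun t ht => ?_
    · exact (interior_Ici.subset ht).le
    · exact one_add_mul_mul_div_sin_sub_one_nonpos (ht₀.trans (interior_Ici.subset ht))
  have hbound : ∀ t ≥ t₀, |x t| ≤ |x t₀| * ((1 + t₀) / (1 + t)) := by
    intro t ht
    have h := hanti self_mem_Ici ht ht
    simp only [abs_mul, abs_of_pos (by linarith : (0 : ℝ) < 1 + t),
      abs_of_pos (by linarith : (0 : ℝ) < 1 + t₀)] at h
    rw [mul_div_assoc', le_div_iff₀ (by linarith)]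
    linarith
  refine ⟨hbound, squeeze_zero_norm' (eventually_atTop.mpr ⟨t₀, hbound⟩) ?_⟩
  simpa only [mul_div_assoc, id] using (tendsto_const_nhds (x := |x t₀| * (1 + t₀))).div_atTop
    (tendsto_atTop_add_const_left _ 1 tendsto_id)
end

section
/- (Example 2) Let k ≥ 1 and r ≥ 1 be integers and let t₀ ≥ 0. Let (x₁,x₂) : [t₀,∞) → ℝ² be continuously differentiable with ẋ₁(t) = −x₁(t)/(1+t) + t²·x₂(t)^{2k−1} − t·x₁(t)^{2r−1} and ẋ₂(t) = −x₂(t)/(1+t) − t²·x₁(t)^{2k−1} − t·x₂(t)^{2r−1} for all t ≥ t₀. Then the Euclidean norm |x(t)| = (x₁(t)² + x₂(t)²)^{1/2} satisfies |x(t)| ≤ 2^{(k−1)/(2k)}·|x(t₀)|·(1+t₀)/(1+t)^{1−1/(2k)} for all t ≥ t₀; in particular the system is globally asymptotically stable. -/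
/-!
The weighted Lyapunov function `V(t) = (1+t)^(2k) (x₁^(2k) + x₂^(2k))` is nonincreasing along
solutions: in `V'` the gyroscopic terms `± t² x^(2k-1)` cancel, the damping `-x/(1+t)` cancels the
derivative of the weight, and what remains is `-2k t (1+t)^(2k) (x₁^(2(k+r-1)) + x₂^(2(k+r-1))) ≤ 0`.
Comparing the `2k`-norm with the Euclidean norm (power means) turns `V(t) ≤ V(t₀)` into
`|x(t)| (1+t) ≤ 2^((k-1)/(2k)) |x(t₀)| (1+t₀)`, which is stronger than the claim because
`(1+t)^(1-1/(2k)) ≤ 1+t`.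
-/

open Set

section Lyapunov

variable {p q : ℕ} {a b x₁ x₂ : ℝ → ℝ}

theorem hasDerivAt_weighted_powSum {s : ℝ} (hs : 1 + s ≠ 0)
    (h₁ : HasDerivAt x₁ (-(x₁ s) / (1 + s) + a s * x₂ s ^ p - b s * x₁ s ^ q) s)
    (h₂ : HasDerivAt x₂ (-(x₂ s) / (1 + s) - a s * x₁ s ^ p - b s * x₂ s ^ q) s) :
    HasDerivAt (fun t => (1 + t) ^ (p + 1) * (x₁ t ^ (p + 1) + x₂ t ^ (p + 1)))
      (-((p + 1) * (1 + s) ^ (p + 1) * b s * (x₁ s ^ (p + q) + x₂ s ^ (p + q)))) s := by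
  have hw : HasDerivAt (fun t : ℝ => (1 + t) ^ (p + 1)) ((p + 1 : ℕ) * (1 + s) ^ p) s := by
    simpa [Pi.pow_def] using ((hasDerivAt_id s).const_add 1).pow (p + 1)
  refine (hw.mul ((h₁.pow (p + 1)).add (h₂.pow (p + 1)))).congr_deriv ?_
  simp only [Pi.add_apply, Pi.pow_apply]
  field_simp
  push_cast
  ring

theorem antitoneOn_weighted_powSum {t₀ : ℝ} (ht₀ : -1 < t₀) (hpq : Even (p + q))
    (hb : ∀ s ≥ t₀, 0 ≤ b s)
    (h₁ : ∀ s ≥ t₀, HasDerivAt x₁ (-(x₁ s) / (1 + s) + a s * x₂ s ^ p - b s * x₁ s ^ q) s)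
    (h₂ : ∀ s ≥ t₀, HasDerivAt x₂ (-(x₂ s) / (1 + s) - a s * x₁ s ^ p - b s * x₂ s ^ q) s) :
    AntitoneOn (fun t => (1 + t) ^ (p + 1) * (x₁ t ^ (p + 1) + x₂ t ^ (p + 1))) (Ici t₀) := by
  have hderiv : ∀ s ≥ t₀, HasDerivAt
      (fun t => (1 + t) ^ (p + 1) * (x₁ t ^ (p + 1) + x₂ t ^ (p + 1)))
      (-((p + 1) * (1 + s) ^ (p + 1) * b s * (x₁ s ^ (p + q) + x₂ s ^ (p + q)))) s :=
    fun s hs => hasDerivAt_weighted_powSum (by linarith) (h₁ s hs) (h₂ s hs)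
  refine antitoneOn_of_hasDerivWithinAt_nonpos (convex_Ici t₀)
    (fun s hs => (hderiv s hs).continuousAt.continuousWithinAt)
    (fun s hs => (hderiv s (interior_subset hs)).hasDerivWithinAt) fun s hs => ?_
  rw [interior_Ici, mem_Ioi] at hs
  have h1s : 0 ≤ 1 + s := by linarith
  have hbs := hb s hs.le
  have hx₁s := hpq.pow_nonneg (x₁ s)
  have hx₂s := hpq.pow_nonneg (x₂ s)
  simp only [neg_nonpos]
  positivity

end Lyapunov

theorem sqrt_sq_add_sq_pow_le (x y : ℝ) (k : ℕ) :
    √(x ^ 2 + y ^ 2) ^ (2 * k) ≤ 2 ^ (k - 1) * (x ^ (2 * k) + y ^ (2 * k)) := by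
  rw [pow_mul, pow_mul, pow_mul, Real.sq_sqrt (by positivity)]
  exact add_pow_le (sq_nonneg x) (sq_nonneg y) k

theorem pow_add_pow_le_sqrt_sq_add_sq_pow (x y : ℝ) {k : ℕ} (hk : k ≠ 0) :
    x ^ (2 * k) + y ^ (2 * k) ≤ √(x ^ 2 + y ^ 2) ^ (2 * k) := by
  rw [pow_mul, pow_mul, pow_mul, Real.sq_sqrt (by positivity)]
  exact pow_add_pow_le (sq_nonneg x) (sq_nonneg y) hk

theorem sqrt_mul_pow_le_of_weighted_powSum_le {x y x₀ y₀ w w₀ : ℝ} {k : ℕ} (hk : k ≠ 0)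
    (h : w ^ (2 * k) * (x ^ (2 * k) + y ^ (2 * k)) ≤
      w₀ ^ (2 * k) * (x₀ ^ (2 * k) + y₀ ^ (2 * k))) :
    (√(x ^ 2 + y ^ 2) * w) ^ (2 * k) ≤ 2 ^ (k - 1) * (√(x₀ ^ 2 + y₀ ^ 2) * w₀) ^ (2 * k) :=
  calc (√(x ^ 2 + y ^ 2) * w) ^ (2 * k)
      ≤ 2 ^ (k - 1) * (x ^ (2 * k) + y ^ (2 * k)) * w ^ (2 * k) := by
        rw [mul_pow]
        exact mul_le_mul_of_nonneg_right (sqrt_sq_add_sq_pow_le _ _ _)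
          ((even_two_mul k).pow_nonneg w)
    _ ≤ 2 ^ (k - 1) * (w₀ ^ (2 * k) * (x₀ ^ (2 * k) + y₀ ^ (2 * k))) := by
        rw [mul_assoc, mul_comm (_ + _)]
        exact mul_le_mul_of_nonneg_left h (by positivity)
    _ ≤ 2 ^ (k - 1) * (√(x₀ ^ 2 + y₀ ^ 2) * w₀) ^ (2 * k) := by
        rw [mul_pow, mul_comm (√(x₀ ^ 2 + y₀ ^ 2) ^ (2 * k))]
        have hw₀ := (even_two_mul k).pow_nonneg w₀
        gcongr
        exact pow_add_pow_le_sqrt_sq_add_sq_pow _ _ hk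

theorem le_rpow_inv_mul_of_pow_le {u v c : ℝ} {n : ℕ} (hn : n ≠ 0) (hu : 0 ≤ u) (hv : 0 ≤ v)
    (hc : 0 ≤ c) (h : u ^ n ≤ c * v ^ n) : u ≤ c ^ (n⁻¹ : ℝ) * v :=
  calc u = (u ^ n) ^ (n⁻¹ : ℝ) := (Real.pow_rpow_inv_natCast hu hn).symm
    _ ≤ (c * v ^ n) ^ (n⁻¹ : ℝ) := Real.rpow_le_rpow (by positivity) h (by positivity)
    _ = c ^ (n⁻¹ : ℝ) * v := by
      rw [Real.mul_rpow hc (by positivity), Real.pow_rpow_inv_natCast hv hn]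

/-- Example 2: for integers `k ≥ 1`, `r ≥ 1`, `t₀ ≥ 0`, every
solution `(x₁, x₂)` of
`ẋ₁ = -x₁/(1+t) + t² x₂^{2k-1} - t x₁^{2r-1}`,
`ẋ₂ = -x₂/(1+t) - t² x₁^{2k-1} - t x₂^{2r-1}`
satisfies `|x(t)| ≤ 2^{(k-1)/(2k)} |x(t₀)| (1+t₀) / (1+t)^{1-1/(2k)}` for all
`t ≥ t₀`, where `|x(t)| = √(x₁(t)² + x₂(t)²)`; in particular the system is
globally asymptotically stable. -/
theorem stmt19 (k r : ℕ) (hk : 1 ≤ k) (hr : 1 ≤ r) (t₀ : ℝ) (ht₀ : 0 ≤ t₀)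
    (x₁ x₂ : ℝ → ℝ)
    (hx₁ : ∀ t ≥ t₀, HasDerivAt x₁
      (-(x₁ t) / (1 + t) + t ^ 2 * (x₂ t) ^ (2 * k - 1) - t * (x₁ t) ^ (2 * r - 1)) t)
    (hx₂ : ∀ t ≥ t₀, HasDerivAt x₂
      (-(x₂ t) / (1 + t) - t ^ 2 * (x₁ t) ^ (2 * k - 1) - t * (x₂ t) ^ (2 * r - 1)) t) :
    ∀ t ≥ t₀, Real.sqrt ((x₁ t) ^ 2 + (x₂ t) ^ 2) ≤
      (2 : ℝ) ^ (((k : ℝ) - 1) / (2 * (k : ℝ))) *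
        Real.sqrt ((x₁ t₀) ^ 2 + (x₂ t₀) ^ 2) * (1 + t₀) /
          (1 + t) ^ (1 - 1 / (2 * (k : ℝ))) := by
  intro t ht
  have hanti := antitoneOn_weighted_powSum (p := 2 * k - 1) (q := 2 * r - 1)
    (a := fun s => s ^ 2) (b := fun s => s) (by linarith) (by exact ⟨k + r - 1, by omega⟩)
    (fun s hs => ht₀.trans hs) hx₁ hx₂
  simp only [show 2 * k - 1 + 1 = 2 * k by omega] at hanti
  have h1t : 1 ≤ 1 + t := by linarith
  have hpow := sqrt_mul_pow_le_of_weighted_powSum_le (by omega)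
    (hanti self_mem_Ici ht ht)
  have hconst : ((2 : ℝ) ^ (k - 1)) ^ (((2 * k : ℕ) : ℝ)⁻¹) =
      2 ^ (((k : ℝ) - 1) / (2 * (k : ℝ))) := by
    rw [← Real.rpow_natCast, ← Real.rpow_mul (by norm_num)]
    push_cast [Nat.cast_sub hk]
    rw [div_eq_mul_inv]
  have hweight : (1 + t) ^ (1 - 1 / (2 * (k : ℝ))) ≤ 1 + t := by
    simpa using Real.rpow_le_rpow_of_exponent_le h1t (sub_le_self 1 (by positivity))
  rw [le_div_iff₀ (by positivity)]
  calc √(x₁ t ^ 2 + x₂ t ^ 2) * (1 + t) ^ (1 - 1 / (2 * (k : ℝ)))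
      ≤ √(x₁ t ^ 2 + x₂ t ^ 2) * (1 + t) := by gcongr
    _ ≤ ((2 : ℝ) ^ (k - 1)) ^ (((2 * k : ℕ) : ℝ)⁻¹) * (√(x₁ t₀ ^ 2 + x₂ t₀ ^ 2) * (1 + t₀)) :=
      le_rpow_inv_mul_of_pow_le (by omega) (by positivity) (by positivity) (by positivity) hpow
    _ = _ := by rw [hconst, mul_assoc]
end
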